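/- arXiv:1309.7673 — 8 statements merged into one kernel-verified Lean document; each statement's English description precedes it below -/
import Mathlib

section
/- If f(x) and g(x) are polynomials with nonnegative coefficients whose coefficient sequences are log-concave (with no internal zeros), then the coefficient sequence of f(x)g(x) is log-concave. -/
open Polynomial

/-- The coefficient sequence is log-concave. -/
def LogConcavePoly (P : Polynomial ℝ) : Prop :=
  ∀ k : ℕ, P.coeff k * P.coeff (k + 2) ≤ (P.coeff (k + 1)) ^ 2

/-- The nonzero coefficients form a contiguous block. -/
def NoInternalZeros (P : Polynomial ℝ) : Prop :=
  ∀ i j k : ℕ, i ≤ j → j ≤ k → P.coeff i ≠ 0 → P.coeff k ≠ 0 → P.coeff j ≠ 0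

def NonnegCoeffs (P : Polynomial ℝ) : Prop :=
  ∀ k : ℕ, 0 ≤ P.coeff k

namespace LCAux

/-! Auxiliary material: extend coefficient sequences to `ℤ`-indexed sequences,
prove the ratio monotonicity lemma for log-concave sequences with no internal
zeros, and the key convolution inequality. -/

lemma sum_shift_sub (h : ℤ → ℝ) (lo hi : ℤ) (hl : h (lo - 1) = 0) (hh : h hi = 0) :
    ∑ i ∈ Finset.Icc lo hi, h (i - 1) = ∑ i ∈ Finset.Icc lo hi, h i := by
  have e1 : ∑ i ∈ Finset.Icc lo hi, h (i - 1) = ∑ i ∈ Finset.Icc (lo - 1) (hi - 1), h i := by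
    apply Finset.sum_nbij' (fun i => i - 1) (fun i => i + 1) <;>
      simp only [Finset.mem_Icc] <;> intros <;> first | omega | trivial
  rw [e1]
  rw [Finset.sum_subset (Finset.Icc_subset_Icc (le_refl _) (by omega) :
        Finset.Icc (lo-1) (hi-1) ⊆ Finset.Icc (lo-1) hi)
      (by intro x hx hx'; simp only [Finset.mem_Icc] at hx hx'
          have : x = hi := by omega
          rw [this]; exact hh)]
  rw [Finset.sum_subset (Finset.Icc_subset_Icc (by omega) (le_refl _) :
        Finset.Icc lo hi ⊆ Finset.Icc (lo-1) hi)
      (by intro x hx hx'; simp only [Finset.mem_Icc] at hx hx'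
          have : x = lo - 1 := by omega
          rw [this]; exact hl)]

lemma sum_shift_add (h : ℤ → ℝ) (lo hi : ℤ) (hl : h lo = 0) (hh : h (hi + 1) = 0) :
    ∑ i ∈ Finset.Icc lo hi, h (i + 1) = ∑ i ∈ Finset.Icc lo hi, h i := by
  have e1 : ∑ i ∈ Finset.Icc lo hi, h (i + 1) = ∑ i ∈ Finset.Icc (lo + 1) (hi + 1), h i := by
    apply Finset.sum_nbij' (fun i => i + 1) (fun i => i - 1) <;>
      simp only [Finset.mem_Icc] <;> intros <;> first | omega | trivial
  rw [e1]
  rw [Finset.sum_subset (Finset.Icc_subset_Icc (by omega) (le_refl _) :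
        Finset.Icc (lo+1) (hi+1) ⊆ Finset.Icc lo (hi+1))
      (by intro x hx hx'; simp only [Finset.mem_Icc] at hx hx'
          have : x = lo := by omega
          rw [this]; exact hl)]
  rw [Finset.sum_subset (Finset.Icc_subset_Icc (le_refl _) (by omega) :
        Finset.Icc lo hi ⊆ Finset.Icc lo (hi+1))
      (by intro x hx hx'; simp only [Finset.mem_Icc] at hx hx'
          have : x = hi + 1 := by omega
          rw [this]; exact hh)]

lemma ratio_lemma (a : ℤ → ℝ) (h0 : ∀ n, 0 ≤ a n)
    (hlc : ∀ m : ℤ, a m * a (m + 2) ≤ a (m + 1) ^ 2)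
    (hiz : ∀ i j k : ℤ, i ≤ j → j ≤ k → a i ≠ 0 → a k ≠ 0 → a j ≠ 0)
    (i j : ℤ) (hij : i ≤ j) : a (i - 1) * a (j + 1) ≤ a i * a j := by
  by_cases h1 : a (i - 1) = 0
  · rw [h1, zero_mul]; exact mul_nonneg (h0 i) (h0 j)
  by_cases h2 : a (j + 1) = 0
  · rw [h2, mul_zero]; exact mul_nonneg (h0 i) (h0 j)
  have hpos : ∀ t, i - 1 ≤ t → t ≤ j + 1 → 0 < a t := by
    intro t ht1 ht2
    exact lt_of_le_of_ne (h0 t) (Ne.symm (hiz (i - 1) t (j + 1) ht1 ht2 h1 h2))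
  have aux : ∀ d : ℕ, ∀ p : ℤ, (∀ t, p - 1 ≤ t → t ≤ p + d + 1 → 0 < a t) →
      a (p - 1) * a (p + d + 1) ≤ a p * a (p + d) := by
    intro d
    induction d with
    | zero =>
      intro p hp
      have := hlc (p - 1)
      have e1 : (p - 1 + 2 : ℤ) = p + 0 + 1 := by ring
      have e2 : (p - 1 + 1 : ℤ) = p := by ring
      rw [e1, e2] at this
      simpa [sq] using this
    | succ n ih =>
      intro p hp
      have h1 := ih p (fun t ht1 ht2 => hp t ht1 (by push_cast; omega))
      have h2 := hlc (p + n)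
      have p1 : 0 < a (p + n) := hp _ (by omega) (by push_cast; omega)
      have p2 : 0 < a (p + n + 1) := hp _ (by omega) (by push_cast; omega)
      have e1 : (p + (n : ℤ) + 2) = p + ((n : ℕ) + 1 : ℕ) + 1 := by push_cast; ring
      have e2 : (p + (n : ℤ) + 1) = p + ((n : ℕ) + 1 : ℕ) := by push_cast; ring
      rw [e1, e2] at h2
      rw [e2] at h1 p2
      have hcomb := mul_le_mul h1 h2 (mul_nonneg (h0 _) (h0 _))
        (mul_nonneg (h0 p) (h0 _))
      have hc : 0 < a (p + n) * a (p + ((n : ℕ) + 1 : ℕ)) := mul_pos p1 p2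
      nlinarith [hcomb, hc, h0 (p - 1), h0 p]
  obtain ⟨d, hd⟩ : ∃ d : ℕ, j = i + d := ⟨(j - i).toNat, by omega⟩
  subst hd
  have := aux d i (fun t ht1 ht2 => hpos t ht1 ht2)
  linarith

lemma conv_lc (a b : ℤ → ℝ)
    (haneg : ∀ n : ℤ, n < 0 → a n = 0) (hbneg : ∀ n : ℤ, n < 0 → b n = 0)
    (har : ∀ i j : ℤ, i ≤ j → a (i - 1) * a (j + 1) ≤ a i * a j)
    (hbr : ∀ i j : ℤ, i ≤ j → b (i - 1) * b (j + 1) ≤ b i * b j)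
    (k : ℤ) :
    (∑ i ∈ Finset.Icc (-2 : ℤ) (k + 4), a i * b (k - i)) *
      (∑ i ∈ Finset.Icc (-2 : ℤ) (k + 4), a i * b (k + 2 - i)) ≤
    (∑ i ∈ Finset.Icc (-2 : ℤ) (k + 4), a i * b (k + 1 - i)) ^ 2 := by
  set J : Finset ℤ := Finset.Icc (-2 : ℤ) (k + 4) with hJ
  set c0 : ℝ := ∑ i ∈ J, a i * b (k - i) with hc0
  set c1 : ℝ := ∑ i ∈ J, a i * b (k + 1 - i) with hc1
  set c2 : ℝ := ∑ i ∈ J, a i * b (k + 2 - i) with hc2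
  have sA : ∑ i ∈ J, a (i - 1) * b (k + 1 - i) = c0 := by
    have step : ∑ i ∈ J, a (i - 1) * b (k + 1 - i) = ∑ i ∈ J, a (i - 1) * b (k - (i - 1)) :=
      Finset.sum_congr rfl (fun i _ => by rw [show k - (i - 1) = k + 1 - i from by ring])
    rw [hc0, step]
    exact sum_shift_sub (fun t => a t * b (k - t)) (-2) (k + 4)
      (by show a (-2 - 1) * b (k - (-2 - 1)) = 0; rw [haneg (-2 - 1) (by omega), zero_mul])
      (by show a (k + 4) * b (k - (k + 4)) = 0; rw [hbneg (k - (k + 4)) (by omega), mul_zero])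
  have sB : ∑ j ∈ J, a (j + 1) * b (k + 1 - j) = c2 := by
    have step : ∑ j ∈ J, a (j + 1) * b (k + 1 - j) = ∑ j ∈ J, a (j + 1) * b (k + 2 - (j + 1)) :=
      Finset.sum_congr rfl (fun j _ => by rw [show k + 2 - (j + 1) = k + 1 - j from by ring])
    rw [hc2, step]
    exact sum_shift_add (fun t => a t * b (k + 2 - t)) (-2) (k + 4)
      (by show a (-2) * b (k + 2 - (-2)) = 0; rw [haneg (-2) (by omega), zero_mul])
      (by show a (k + 4 + 1) * b (k + 2 - (k + 4 + 1)) = 0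
          rw [hbneg (k + 2 - (k + 4 + 1)) (by omega), mul_zero])
  have sC : ∑ i ∈ J, a (i - 1) * b (k + 2 - i) = c1 := by
    have step : ∑ i ∈ J, a (i - 1) * b (k + 2 - i) = ∑ i ∈ J, a (i - 1) * b (k + 1 - (i - 1)) :=
      Finset.sum_congr rfl (fun i _ => by rw [show k + 1 - (i - 1) = k + 2 - i from by ring])
    rw [hc1, step]
    exact sum_shift_sub (fun t => a t * b (k + 1 - t)) (-2) (k + 4)
      (by show a (-2 - 1) * b (k + 1 - (-2 - 1)) = 0; rw [haneg (-2 - 1) (by omega), zero_mul])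
      (by show a (k + 4) * b (k + 1 - (k + 4)) = 0
          rw [hbneg (k + 1 - (k + 4)) (by omega), mul_zero])
  have sD : ∑ j ∈ J, a (j + 1) * b (k - j) = c1 := by
    have step : ∑ j ∈ J, a (j + 1) * b (k - j) = ∑ j ∈ J, a (j + 1) * b (k + 1 - (j + 1)) :=
      Finset.sum_congr rfl (fun j _ => by rw [show k + 1 - (j + 1) = k - j from by ring])
    rw [hc1, step]
    exact sum_shift_add (fun t => a t * b (k + 1 - t)) (-2) (k + 4)
      (by show a (-2) * b (k + 1 - (-2)) = 0; rw [haneg (-2) (by omega), zero_mul])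
      (by show a (k + 4 + 1) * b (k + 1 - (k + 4 + 1)) = 0
          rw [hbneg (k + 1 - (k + 4 + 1)) (by omega), mul_zero])
  have E : ∑ i ∈ J, ∑ j ∈ J,
      (a i * a j - a (i - 1) * a (j + 1)) *
        (b (k + 1 - i) * b (k + 1 - j) - b (k + 2 - i) * b (k - j))
      = 2 * c1 ^ 2 - 2 * (c0 * c2) := by
    calc ∑ i ∈ J, ∑ j ∈ J,
        (a i * a j - a (i - 1) * a (j + 1)) *
          (b (k + 1 - i) * b (k + 1 - j) - b (k + 2 - i) * b (k - j))
        = ∑ i ∈ J, ∑ j ∈ J,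
          ((a i * b (k + 1 - i)) * (a j * b (k + 1 - j))
            - (a i * b (k + 2 - i)) * (a j * b (k - j))
            - (a (i - 1) * b (k + 1 - i)) * (a (j + 1) * b (k + 1 - j))
            + (a (i - 1) * b (k + 2 - i)) * (a (j + 1) * b (k - j))) :=
          Finset.sum_congr rfl (fun i _ => Finset.sum_congr rfl (fun j _ => by ring))
      _ = (∑ i ∈ J, ∑ j ∈ J, (a i * b (k + 1 - i)) * (a j * b (k + 1 - j)))
            - (∑ i ∈ J, ∑ j ∈ J, (a i * b (k + 2 - i)) * (a j * b (k - j)))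
            - (∑ i ∈ J, ∑ j ∈ J, (a (i - 1) * b (k + 1 - i)) * (a (j + 1) * b (k + 1 - j)))
            + (∑ i ∈ J, ∑ j ∈ J, (a (i - 1) * b (k + 2 - i)) * (a (j + 1) * b (k - j))) := by
          simp only [Finset.sum_sub_distrib, Finset.sum_add_distrib]
      _ = (∑ i ∈ J, a i * b (k + 1 - i)) * (∑ j ∈ J, a j * b (k + 1 - j))
            - (∑ i ∈ J, a i * b (k + 2 - i)) * (∑ j ∈ J, a j * b (k - j))
            - (∑ i ∈ J, a (i - 1) * b (k + 1 - i)) * (∑ j ∈ J, a (j + 1) * b (k + 1 - j))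
            + (∑ i ∈ J, a (i - 1) * b (k + 2 - i)) * (∑ j ∈ J, a (j + 1) * b (k - j)) := by
          rw [Finset.sum_mul_sum, Finset.sum_mul_sum, Finset.sum_mul_sum, Finset.sum_mul_sum]
      _ = c1 * c1 - c2 * c0 - c0 * c2 + c1 * c1 := by
          rw [← hc1, ← hc2, ← hc0, sA, sB, sC, sD]
      _ = 2 * c1 ^ 2 - 2 * (c0 * c2) := by ring
  have pos : ∀ i j : ℤ, 0 ≤ (a i * a j - a (i - 1) * a (j + 1)) *
      (b (k + 1 - i) * b (k + 1 - j) - b (k + 2 - i) * b (k - j)) := by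
    intro i j
    rcases le_or_gt i j with hij | hij
    · apply mul_nonneg
      · exact sub_nonneg.2 (har i j hij)
      · have h := hbr (k + 1 - j) (k + 1 - i) (by omega)
        rw [show (k + 1 - j - 1 : ℤ) = k - j from by ring,
            show (k + 1 - i + 1 : ℤ) = k + 2 - i from by ring] at h
        have e1 := mul_comm (b (k - j)) (b (k + 2 - i))
        have e2 := mul_comm (b (k + 1 - j)) (b (k + 1 - i))
        linarith
    · rcases eq_or_lt_of_le (by omega : j + 1 ≤ i) with heq | hlt
      · rw [← heq, show (j + 1 - 1 : ℤ) = j from by ring,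
            show a (j + 1) * a j - a j * a (j + 1) = 0 from by ring, zero_mul]
      · have hP : a i * a j - a (i - 1) * a (j + 1) ≤ 0 := by
          have h := har (j + 1) (i - 1) (by omega)
          rw [show (j + 1 - 1 : ℤ) = j from by ring,
              show (i - 1 + 1 : ℤ) = i from by ring] at h
          have e1 := mul_comm (a j) (a i)
          have e2 := mul_comm (a (j + 1)) (a (i - 1))
          linarith
        have hQ : b (k + 1 - i) * b (k + 1 - j) - b (k + 2 - i) * b (k - j) ≤ 0 := by
          have h := hbr (k + 2 - i) (k - j) (by omega)
          rw [show (k + 2 - i - 1 : ℤ) = k + 1 - i from by ring,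
              show (k - j + 1 : ℤ) = k + 1 - j from by ring] at h
          linarith
        nlinarith [hP, hQ]
  have hsum : (0:ℝ) ≤ ∑ i ∈ J, ∑ j ∈ J,
      (a i * a j - a (i - 1) * a (j + 1)) *
        (b (k + 1 - i) * b (k + 1 - j) - b (k + 2 - i) * b (k - j)) :=
    Finset.sum_nonneg fun i _ => Finset.sum_nonneg fun j _ => pos i j
  rw [E] at hsum
  linarith

noncomputable def ext (P : Polynomial ℝ) : ℤ → ℝ :=
  fun n => if 0 ≤ n then P.coeff n.toNat else 0

lemma ext_coe (P : Polynomial ℝ) (n : ℕ) : ext P (n : ℤ) = P.coeff n := by simp [ext]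

lemma ext_neg (P : Polynomial ℝ) (n : ℤ) (hn : n < 0) : ext P n = 0 := by
  simp [ext, not_le.mpr hn]

lemma ext_nonneg (P : Polynomial ℝ) (h : NonnegCoeffs P) (n : ℤ) : 0 ≤ ext P n := by
  unfold ext; split
  · exact h _
  · exact le_refl 0

lemma ext_lc (P : Polynomial ℝ) (h : LogConcavePoly P) (m : ℤ) :
    ext P m * ext P (m + 2) ≤ ext P (m + 1) ^ 2 := by
  rcases le_or_gt 0 m with hm | hm
  · obtain ⟨n, rfl⟩ := Int.eq_ofNat_of_zero_le hm
    have e1 : ((n : ℤ) + 2) = ((n + 2 : ℕ) : ℤ) := by push_cast; ring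
    have e2 : ((n : ℤ) + 1) = ((n + 1 : ℕ) : ℤ) := by push_cast; ring
    rw [e1, e2, ext_coe, ext_coe, ext_coe]
    exact h n
  · rw [ext_neg P m hm, zero_mul]
    positivity

lemma ext_iz (P : Polynomial ℝ) (h : NoInternalZeros P) (i j k : ℤ)
    (hij : i ≤ j) (hjk : j ≤ k) (hi : ext P i ≠ 0) (hk : ext P k ≠ 0) : ext P j ≠ 0 := by
  have hi0 : 0 ≤ i := by by_contra hc; exact hi (ext_neg P i (by omega))
  have hj0 : 0 ≤ j := le_trans hi0 hij
  have hk0 : 0 ≤ k := le_trans hj0 hjk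
  rw [ext] at hi hk ⊢
  simp only [hi0, hj0, hk0, if_pos] at hi hk ⊢
  exact h i.toNat j.toNat k.toNat (by omega) (by omega) hi hk

lemma coeff_conv (P Q : Polynomial ℝ) (n : ℕ) (M : ℤ) (hM : (n : ℤ) ≤ M) :
    (P * Q).coeff n = ∑ i ∈ Finset.Icc (-2 : ℤ) M, ext P i * ext Q ((n : ℤ) - i) := by
  rw [Polynomial.coeff_mul, Finset.Nat.sum_antidiagonal_eq_sum_range_succ_mk]
  have h1 : ∑ i ∈ Finset.Icc (-2 : ℤ) M, ext P i * ext Q ((n : ℤ) - i)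
      = ∑ i ∈ Finset.Icc (0 : ℤ) (n : ℤ), ext P i * ext Q ((n : ℤ) - i) := by
    refine (Finset.sum_subset (fun x hx => ?_) (fun x hx hx' => ?_)).symm
    · simp only [Finset.mem_Icc] at hx ⊢; omega
    · simp only [Finset.mem_Icc] at hx hx'
      rcases lt_or_ge x 0 with h | h
      · rw [ext_neg P x h, zero_mul]
      · rw [ext_neg Q ((n : ℤ) - x) (by omega), mul_zero]
  rw [h1]
  refine Finset.sum_nbij' (fun (m : ℕ) => (m : ℤ)) (fun (t : ℤ) => t.toNat)
    (fun m hm => ?_) (fun t ht => ?_) (fun m _ => by simp) (fun t ht => ?_) (fun m hm => ?_)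
  · simp only [Finset.mem_range] at hm; simp only [Finset.mem_Icc]; omega
  · simp only [Finset.mem_Icc] at ht; simp only [Finset.mem_range]; omega
  · simp only [Finset.mem_Icc] at ht; show ((t.toNat : ℤ)) = t; omega
  · simp only [Finset.mem_range] at hm
    rw [ext_coe, show ((n : ℤ) - (m : ℤ)) = ((n - m : ℕ) : ℤ) from by omega, ext_coe]

end LCAux

theorem stmt_1 (f g : Polynomial ℝ)
    (hf : NonnegCoeffs f) (hg : NonnegCoeffs g)
    (hflc : LogConcavePoly f) (hglc : LogConcavePoly g)
    (hfi : NoInternalZeros f) (hgi : NoInternalZeros g) :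
    LogConcavePoly (f * g) := by
  intro k
  have har := LCAux.ratio_lemma (LCAux.ext f) (LCAux.ext_nonneg f hf)
    (LCAux.ext_lc f hflc) (LCAux.ext_iz f hfi)
  have hbr := LCAux.ratio_lemma (LCAux.ext g) (LCAux.ext_nonneg g hg)
    (LCAux.ext_lc g hglc) (LCAux.ext_iz g hgi)
  have key := LCAux.conv_lc (LCAux.ext f) (LCAux.ext g)
    (LCAux.ext_neg f) (LCAux.ext_neg g) har hbr (k : ℤ)
  have e0 := LCAux.coeff_conv f g k ((k : ℤ) + 4) (by omega)
  have e1 := LCAux.coeff_conv f g (k + 1) ((k : ℤ) + 4) (by push_cast; omega)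
  have e2 := LCAux.coeff_conv f g (k + 2) ((k : ℤ) + 4) (by push_cast; omega)
  push_cast at e1 e2
  rw [e0, e1, e2]
  exact key
end

section
/- If f(x) is a log-concave polynomial with positive coefficients and no internal zeros, and g(x) is a unimodal polynomial with nonnegative coefficients, then f(x)g(x) is unimodal. -/
open Polynomial

def PosCoeffs (P : Polynomial ℝ) : Prop :=
  ∀ k ≤ P.natDegree, 0 < P.coeff k

/-- `m` is a mode of the coefficient sequence of `P`. -/
def IsMode (P : Polynomial ℝ) (m : ℕ) : Prop :=
  m ≤ P.natDegree ∧ (∀ i j : ℕ, i ≤ j → j ≤ m → P.coeff i ≤ P.coeff j) ∧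
    (∀ i j : ℕ, m ≤ i → i ≤ j → P.coeff j ≤ P.coeff i)

def UnimodalPoly (P : Polynomial ℝ) : Prop := ∃ m, IsMode P m

/-- Coefficients of `f` extended to integer indices (zero for negative indices). -/
noncomputable def Aux (f : Polynomial ℝ) : ℤ → ℝ :=
  fun k => if 0 ≤ k then f.coeff k.toNat else 0

/-- Backward difference sequence of the coefficients of `g`. -/
noncomputable def dd (g : Polynomial ℝ) : ℕ → ℝ :=
  fun j => if j = 0 then g.coeff 0 else g.coeff j - g.coeff (j - 1)

lemma Aux_natCast (f : Polynomial ℝ) (k : ℕ) : Aux f (k : ℤ) = f.coeff k := by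
  simp [Aux]

lemma coeff_nonneg_of_pos (f : Polynomial ℝ) (hf : PosCoeffs f) (k : ℕ) :
    0 ≤ f.coeff k := by
  rcases le_or_gt k f.natDegree with h | h
  · exact (hf k h).le
  · rw [f.coeff_eq_zero_of_natDegree_lt h]

lemma Aux_nonneg (f : Polynomial ℝ) (hf : PosCoeffs f) (k : ℤ) : 0 ≤ Aux f k := by
  unfold Aux
  split
  · exact coeff_nonneg_of_pos f hf _
  · exact le_refl 0

lemma Aux_pos (f : Polynomial ℝ) (hf : PosCoeffs f) (k : ℤ)
    (h0 : 0 ≤ k) (h1 : k ≤ (f.natDegree : ℤ)) : 0 < Aux f k := by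
  unfold Aux
  rw [if_pos h0]
  exact hf k.toNat (by omega)

lemma Aux_zero_of_neg (f : Polynomial ℝ) (k : ℤ) (h : k < 0) : Aux f k = 0 := by
  unfold Aux
  rw [if_neg (by omega)]

lemma Aux_zero_of_big (f : Polynomial ℝ) (k : ℤ) (h : (f.natDegree : ℤ) < k) :
    Aux f k = 0 := by
  unfold Aux
  split
  · exact f.coeff_eq_zero_of_natDegree_lt (by omega)
  · rfl

lemma key_nat (f : Polynomial ℝ) (hf : PosCoeffs f) (hlc : LogConcavePoly f) :
    ∀ t q : ℕ, q + t + 1 ≤ f.natDegree →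
      f.coeff (q + t + 1) * f.coeff q ≤ f.coeff (q + t) * f.coeff (q + 1) := by
  intro t
  induction t with
  | zero =>
    intro q h
    simp only [Nat.add_zero]
    rw [mul_comm]
  | succ t ih =>
    intro q h
    have e1 : q + (t + 1) + 1 = q + t + 2 := by omega
    have e2 : q + (t + 1) = q + t + 1 := by omega
    rw [e1, e2]
    have h1 : q + t + 1 ≤ f.natDegree := by omega
    have ihq := ih q h1
    have hlcq := hlc (q + t)
    have hA := hf (q + t) (by omega)
    have hB := hf (q + t + 1) (by omega)
    have hC := hf (q + t + 2) (by omega)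
    have hx := coeff_nonneg_of_pos f hf q
    have hy := coeff_nonneg_of_pos f hf (q + 1)
    nlinarith [mul_le_mul ihq hlcq (mul_nonneg hA.le hC.le) (mul_nonneg hA.le hy),
      mul_pos hA hB]

lemma key_int (f : Polynomial ℝ) (hf : PosCoeffs f) (hlc : LogConcavePoly f)
    (q p : ℤ) (hqp : q ≤ p) :
    Aux f (p + 1) * Aux f q ≤ Aux f p * Aux f (q + 1) := by
  rcases lt_or_ge q 0 with hq | hq
  · rw [Aux_zero_of_neg f q hq, mul_zero]
    exact mul_nonneg (Aux_nonneg f hf _) (Aux_nonneg f hf _)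
  rcases lt_or_ge (f.natDegree : ℤ) (p + 1) with hp | hp
  · rw [Aux_zero_of_big f _ hp, zero_mul]
    exact mul_nonneg (Aux_nonneg f hf _) (Aux_nonneg f hf _)
  obtain ⟨qn, rfl⟩ : ∃ qn : ℕ, q = (qn : ℤ) := ⟨q.toNat, by omega⟩
  obtain ⟨tn, rfl⟩ : ∃ tn : ℕ, p = ((qn + tn : ℕ) : ℤ) := ⟨(p - (qn:ℤ)).toNat, by push_cast; omega⟩
  have e1 : ((qn + tn : ℕ) : ℤ) + 1 = ((qn + tn + 1 : ℕ) : ℤ) := by push_cast; ring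
  have e2 : ((qn : ℕ) : ℤ) + 1 = ((qn + 1 : ℕ) : ℤ) := by push_cast; ring
  rw [e1, e2, Aux_natCast, Aux_natCast, Aux_natCast, Aux_natCast]
  exact key_nat f hf hlc tn qn (by omega)

lemma coeff_mul_range (f g : Polynomial ℝ) (n : ℕ) :
    (f * g).coeff n = ∑ j ∈ Finset.range (n + 1), g.coeff j * f.coeff (n - j) := by
  rw [mul_comm, Polynomial.coeff_mul, Finset.Nat.sum_antidiagonal_eq_sum_range_succ_mk]

lemma coeff_diff (f g : Polynomial ℝ) (n N : ℕ) (hN : n + 2 ≤ N) :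
    (f * g).coeff (n + 1) - (f * g).coeff n =
      ∑ j ∈ Finset.range N, Aux f ((n : ℤ) + 1 - (j : ℤ)) * dd g j := by
  have hsub : Finset.range (n + 2) ⊆ Finset.range N := Finset.range_subset_range.2 hN
  rw [← Finset.sum_subset hsub (by
    intro j hj hj2
    simp only [Finset.mem_range] at hj hj2
    rw [Aux_zero_of_neg f _ (by omega), zero_mul])]
  have hc1 : (f * g).coeff (n + 1)
      = ∑ j ∈ Finset.range (n + 2), g.coeff j * f.coeff (n + 1 - j) := by
    rw [coeff_mul_range]
  have step1 : ∑ j ∈ Finset.range (n + 2), Aux f ((n : ℤ) + 1 - (j : ℤ)) * dd g j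
      = ∑ j ∈ Finset.range (n + 2),
          (g.coeff j * f.coeff (n + 1 - j)
            - f.coeff (n + 1 - j) * (if j = 0 then 0 else g.coeff (j - 1))) := by
    apply Finset.sum_congr rfl
    intro j hj
    simp only [Finset.mem_range] at hj
    have e : (n : ℤ) + 1 - (j : ℤ) = ((n + 1 - j : ℕ) : ℤ) := by omega
    rw [e, Aux_natCast]
    unfold dd
    by_cases h0 : j = 0
    · rw [if_pos h0, if_pos h0, h0]
      ring
    · rw [if_neg h0, if_neg h0]
      ring
  have step2 : ∑ j ∈ Finset.range (n + 2),
        f.coeff (n + 1 - j) * (if j = 0 then 0 else g.coeff (j - 1))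
      = (f * g).coeff n := by
    rw [show n + 2 = n + 1 + 1 from rfl, Finset.sum_range_succ']
    simp only [reduceIte, mul_zero, add_zero]
    rw [coeff_mul_range]
    apply Finset.sum_congr rfl
    intro j hj
    rw [if_neg (Nat.succ_ne_zero j)]
    have e1 : n + 1 - (j + 1) = n - j := by omega
    have e2 : j + 1 - 1 = j := by omega
    rw [e1, e2]
    ring
  rw [step1, Finset.sum_sub_distrib, step2, ← hc1]

theorem stmt_2 (f g : Polynomial ℝ)
    (hfpos : PosCoeffs f) (hflc : LogConcavePoly f) (hfi : NoInternalZeros f)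
    (hgnn : NonnegCoeffs g) (hgu : UnimodalPoly g) :
    UnimodalPoly (f * g) := by
  classical
  by_cases hg0 : g = 0
  · subst hg0
    refine ⟨0, by simp, ?_, ?_⟩ <;> intros <;> simp
  obtain ⟨m, hm, hup, hdown⟩ := hgu
  have hf0 : f ≠ 0 := by
    intro h
    have h00 := hfpos 0 (Nat.zero_le _)
    rw [h] at h00
    simp at h00
  have hAnn : ∀ k : ℤ, 0 ≤ Aux f k := Aux_nonneg f hfpos
  -- sign of the difference sequence of g
  have hd_nonneg : ∀ j, j ≤ m → 0 ≤ dd g j := by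
    intro j hj
    unfold dd
    split
    · exact hgnn 0
    · have := hup (j - 1) j (by omega) hj
      linarith
  have hd_nonpos : ∀ j, m < j → dd g j ≤ 0 := by
    intro j hj
    unfold dd
    rw [if_neg (by omega)]
    have := hdown (j - 1) j (by omega) (by omega)
    linarith
  -- (1) differences are nonnegative well below the mode
  have hD_nonneg : ∀ n : ℕ, n + 2 ≤ m →
      0 ≤ (f * g).coeff (n + 1) - (f * g).coeff n := by
    intro n hn
    rw [coeff_diff f g n (n + 2) le_rfl]
    apply Finset.sum_nonneg
    intro j hj
    simp only [Finset.mem_range] at hj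
    exact mul_nonneg (hAnn _) (hd_nonneg j (by omega))
  -- (2) differences are nonpositive past m + deg f
  have hD_nonpos : ∀ n : ℕ, m + f.natDegree ≤ n →
      (f * g).coeff (n + 1) - (f * g).coeff n ≤ 0 := by
    intro n hn
    rw [coeff_diff f g n (n + 2) le_rfl]
    apply Finset.sum_nonpos
    intro j hj
    simp only [Finset.mem_range] at hj
    rcases le_or_gt j m with h | h
    · rw [Aux_zero_of_big f _ (by omega), zero_mul]
    · exact mul_nonpos_of_nonneg_of_nonpos (hAnn _) (hd_nonpos j h)
  -- (3) propagation of negativity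
  have hprop : ∀ n : ℕ, m ≤ n + 1 → n + 2 ≤ m + f.natDegree →
      (f * g).coeff (n + 1) - (f * g).coeff n < 0 →
      (f * g).coeff (n + 2) - (f * g).coeff (n + 1) < 0 := by
    intro n h1 h2 hDn
    have hA1 : 0 < Aux f ((n : ℤ) + 1 - m) := Aux_pos f hfpos _ (by omega) (by omega)
    have hA2 : 0 < Aux f ((n : ℤ) + 2 - m) := Aux_pos f hfpos _ (by omega) (by omega)
    have hkey : Aux f ((n : ℤ) + 1 - m) * ((f * g).coeff (n + 2) - (f * g).coeff (n + 1))
        ≤ Aux f ((n : ℤ) + 2 - m) * ((f * g).coeff (n + 1) - (f * g).coeff n) := by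
      have e0 := coeff_diff f g (n + 1) (n + 4) (by omega)
      have e1 : ∀ j : ℕ, ((n + 1 : ℕ) : ℤ) + 1 - (j : ℤ) = (n : ℤ) + 2 - j := by
        intro j; push_cast; ring
      simp only [e1] at e0
      rw [show n + 1 + 1 = n + 2 from rfl] at e0
      rw [e0, coeff_diff f g n (n + 4) (by omega), Finset.mul_sum, Finset.mul_sum]
      refine Finset.sum_le_sum ?_
      intro j hj
      simp only [Finset.mem_range] at hj
      rcases le_or_gt j m with hjm | hjm
      · have hk := key_int f hfpos hflc ((n : ℤ) + 1 - m) ((n : ℤ) + 1 - j) (by omega)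
        rw [show (n : ℤ) + 1 - j + 1 = (n : ℤ) + 2 - j by ring,
          show (n : ℤ) + 1 - m + 1 = (n : ℤ) + 2 - m by ring] at hk
        have hd := hd_nonneg j hjm
        nlinarith [mul_le_mul_of_nonneg_right hk hd]
      · have hk := key_int f hfpos hflc ((n : ℤ) + 1 - j) ((n : ℤ) + 1 - m) (by omega)
        rw [show (n : ℤ) + 1 - j + 1 = (n : ℤ) + 2 - j by ring,
          show (n : ℤ) + 1 - m + 1 = (n : ℤ) + 2 - m by ring] at hk
        have hd := hd_nonpos j hjm
        nlinarith [mul_le_mul_of_nonpos_right hk hd]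
    have hneg := mul_neg_of_pos_of_neg hA2 hDn
    nlinarith [hkey, hneg, hA1]
  -- the predicate whose least witness is the mode
  set Q : ℕ → Prop := fun n =>
    (f * g).coeff (n + 1) - (f * g).coeff n ≤ 0 ∧
      ((f * g).coeff (n + 1) - (f * g).coeff n < 0 ∨ m + f.natDegree ≤ n) with hQdef
  have hQstep : ∀ n, Q n → Q (n + 1) := by
    intro n hQn
    obtain ⟨hle, hor⟩ := hQn
    rcases hor with h2 | h2
    · rcases le_or_gt (m + f.natDegree) n with hmr | hmr
      · exact ⟨hD_nonpos (n + 1) (by omega), Or.inr (by omega)⟩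
      · have hm1 : m ≤ n + 1 := by
          by_contra hc
          push_neg at hc
          have := hD_nonneg n (by omega)
          linarith
        rcases le_or_gt (n + 2) (m + f.natDegree) with h3 | h3
        · have hlt := hprop n hm1 h3 h2
          exact ⟨hlt.le, Or.inl hlt⟩
        · exact ⟨hD_nonpos (n + 1) (by omega), Or.inr (by omega)⟩
    · exact ⟨hD_nonpos (n + 1) (by omega), Or.inr (by omega)⟩
  have hQex : ∃ n, Q n := ⟨m + f.natDegree, hD_nonpos _ le_rfl, Or.inr le_rfl⟩
  let n0 := Nat.find hQex
  have hQn0 : Q n0 := Nat.find_spec hQex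
  have hQge : ∀ n, n0 ≤ n → Q n := by
    intro n hn
    induction n, hn using Nat.le_induction with
    | base => exact hQn0
    | succ n hn ih => exact hQstep n ih
  have hlt : ∀ n, n < n0 → 0 ≤ (f * g).coeff (n + 1) - (f * g).coeff n := by
    intro n hn
    have hnot := Nat.find_min hQex hn
    by_contra hc
    push_neg at hc
    exact hnot ⟨hc.le, Or.inl hc⟩
  have hn0le : n0 ≤ m + f.natDegree :=
    Nat.find_min' hQex ⟨hD_nonpos _ le_rfl, Or.inr le_rfl⟩
  have hdeg : (f * g).natDegree = f.natDegree + g.natDegree :=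
    Polynomial.natDegree_mul hf0 hg0
  refine ⟨n0, by omega, ?_, ?_⟩
  · intro i j hij
    induction j, hij using Nat.le_induction with
    | base => exact fun _ => le_rfl
    | succ j hij ih =>
      intro hj
      have h1 := ih (by omega)
      have h2 := hlt j (by omega)
      linarith
  · intro i j hi hij
    induction j, hij using Nat.le_induction with
    | base => exact le_rfl
    | succ j hij ih =>
      have h2 := (hQge j (hi.trans hij)).1
      linarith
end

section
/- If P(x) is a log-concave polynomial with nonnegative coefficients and no internal zeros, then P(x+r) is log-concave for every positive real r. -/
open Polynomial Finset

-- TP2 for adjacent columns of Pascal matrix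
lemma tp2 (u v i : ℕ) (h : u ≤ v) :
    u.choose (i+1) * v.choose i ≤ u.choose i * v.choose (i+1) := by
  have h1 := Nat.choose_succ_right_eq u i
  have h2 := Nat.choose_succ_right_eq v i
  have hs : u - i ≤ v - i := Nat.sub_le_sub_right h i
  have key : u.choose (i+1) * v.choose i * (i+1) ≤ u.choose i * v.choose (i+1) * (i+1) := by
    calc u.choose (i+1) * v.choose i * (i+1)
        = (u.choose (i+1) * (i+1)) * v.choose i := by ring
      _ = u.choose i * (u-i) * v.choose i := by rw [h1]
      _ ≤ u.choose i * (v-i) * v.choose i :=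
          Nat.mul_le_mul_right _ (Nat.mul_le_mul_left _ hs)
      _ = (v.choose i * (v-i)) * u.choose i := by ring
      _ = (v.choose (i+1) * (i+1)) * u.choose i := by rw [h2]
      _ = u.choose i * v.choose (i+1) * (i+1) := by ring
  exact Nat.le_of_mul_le_mul_right key (Nat.succ_pos i)

-- window sums of the binomial kernel are nonneg (telescoping)
lemma Fnonneg (k s t : ℕ) (ht : 2*t ≤ s+1) :
    0 ≤ ∑ m ∈ Finset.Ico t (s+1-t),
      ((m.choose (k+1) : ℝ) * ((s-m).choose (k+1) : ℝ)
        - (m.choose k : ℝ) * ((s-m).choose (k+2) : ℝ)) := by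
  set φ : ℕ → ℝ := fun m => (m.choose (k+1) : ℝ) * ((s+1-m).choose (k+2) : ℝ) with hφ
  have hstep : ∀ m, m ≤ s →
      (m.choose (k+1) : ℝ) * ((s-m).choose (k+1) : ℝ)
        - (m.choose k : ℝ) * ((s-m).choose (k+2) : ℝ) = φ m - φ (m+1) := by
    intro m hm
    have e1 : s+1-m = (s-m)+1 := by omega
    have e2 : s+1-(m+1) = s-m := by omega
    simp only [hφ, e1, e2, Nat.choose_succ_succ]
    push_cast
    ring
  have hts : t ≤ s+1-t := by omega
  have hsum : ∑ m ∈ Finset.Ico t (s+1-t),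
      ((m.choose (k+1) : ℝ) * ((s-m).choose (k+1) : ℝ)
        - (m.choose k : ℝ) * ((s-m).choose (k+2) : ℝ)) = φ t - φ (s+1-t) := by
    rw [Finset.sum_Ico_eq_sum_range]
    have : ∀ i ∈ Finset.range (s+1-t-t),
        ((((t+i).choose (k+1) : ℝ)) * (((s-(t+i)).choose (k+1) : ℝ))
          - (((t+i).choose k : ℝ)) * (((s-(t+i)).choose (k+2) : ℝ)))
        = φ (t+i) - φ (t+(i+1)) := by
      intro i hi
      rw [Finset.mem_range] at hi
      rw [show t+(i+1) = t+i+1 from by omega]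
      exact hstep (t+i) (by omega)
    rw [Finset.sum_congr rfl this, Finset.sum_range_sub' (fun i => φ (t+i))]
    rw [Nat.add_zero, show t + (s+1-t-t) = s+1-t from by omega]
  rw [hsum]
  have e3 : s+1-(s+1-t) = t := by omega
  have : φ (s+1-t) ≤ φ t := by
    simp only [hφ, e3]
    have := tp2 t (s+1-t) (k+1) hts
    calc ((s+1-t).choose (k+1) : ℝ) * (t.choose (k+2) : ℝ)
        = ((t.choose (k+2) * (s+1-t).choose (k+1) : ℕ) : ℝ) := by push_cast; ring
      _ ≤ ((t.choose (k+1) * (s+1-t).choose (k+2) : ℕ) : ℝ) := by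
          exact_mod_cast Nat.cast_le.mpr (tp2 t (s+1-t) (k+1) hts)
      _ = (t.choose (k+1) : ℝ) * ((s+1-t).choose (k+2) : ℝ) := by push_cast; ring
  linarith


lemma chainL (a : ℕ → ℝ) (h0 : ∀ n, 0 ≤ a n)
    (hlc : ∀ j, a j * a (j+2) ≤ a (j+1)^2) :
    ∀ d m, (∀ j, m+1 ≤ j → j ≤ m+1+d → 0 < a j) →
      a m * a (m+2+d) ≤ a (m+1) * a (m+1+d) := by
  intro d
  induction d with
  | zero =>
    intro m _
    simpa [sq] using hlc m
  | succ d ih =>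
    intro m hpos
    have h1 := ih m (fun j hj hj' => hpos j hj (by omega))
    have h2 := hlc (m+1+d)
    have p1 : 0 < a (m+1+d) := hpos _ (by omega) (by omega)
    have p2 : 0 < a (m+2+d) := hpos _ (by omega) (by omega)
    have e1 : m+1+d+2 = m+3+d := by omega
    have e2 : m+1+d+1 = m+2+d := by omega
    rw [e1, e2] at h2
    have e3 : m+2+(d+1) = m+3+d := by omega
    have e4 : m+1+(d+1) = m+2+d := by omega
    rw [e3, e4]
    have hmul := mul_le_mul h1 h2 (mul_nonneg (h0 _) (h0 _)) (mul_nonneg (h0 _) (h0 _))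
    nlinarith [hmul, p1, p2, mul_pos p1 p2, h0 m, h0 (m+1), h0 (m+3+d)]

lemma stepL (a : ℕ → ℝ) (h0 : ∀ n, 0 ≤ a n)
    (hlc : ∀ j, a j * a (j+2) ≤ a (j+1)^2)
    (hiz : ∀ i j l, i ≤ j → j ≤ l → a i ≠ 0 → a l ≠ 0 → a j ≠ 0) :
    ∀ d m, a m * a (m+2+d) ≤ a (m+1) * a (m+1+d) := by
  intro d m
  by_cases hall : ∀ j, m+1 ≤ j → j ≤ m+1+d → 0 < a j
  · exact chainL a h0 hlc d m hall
  · push_neg at hall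
    obtain ⟨j, hj1, hj2, hj3⟩ := hall
    have hz : a j = 0 := le_antisymm hj3 (h0 j)
    by_cases hm : a m = 0
    · rw [hm, zero_mul]
      exact mul_nonneg (h0 _) (h0 _)
    · have hk : a (m+2+d) = 0 := by
        by_contra hk
        exact (hiz m j (m+2+d) (by omega) (by omega) hm hk) hz
      rw [hk, mul_zero]
      exact mul_nonneg (h0 _) (h0 _)

lemma emonoL (a : ℕ → ℝ) (h0 : ∀ n, 0 ≤ a n)
    (hlc : ∀ j, a j * a (j+2) ≤ a (j+1)^2)
    (hiz : ∀ i j l, i ≤ j → j ≤ l → a i ≠ 0 → a l ≠ 0 → a j ≠ 0)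
    (s t : ℕ) (ht : 2*t+2 ≤ s+1) :
    a t * a (s-t) ≤ a (t+1) * a (s-(t+1)) := by
  rcases eq_or_lt_of_le ht with heq | hlt
  · have e1 : s - t = t+1 := by omega
    have e2 : s - (t+1) = t := by omega
    rw [e1, e2, mul_comm]
  · have e1 : s - t = t + 2 + (s - 2*t - 2) := by omega
    have e2 : s - (t+1) = t + 1 + (s - 2*t - 2) := by omega
    rw [e1, e2]
    exact stepL a h0 hlc hiz _ t

lemma abelL (s : ℕ) (e f : ℕ → ℝ) (he0 : ∀ m, 0 ≤ e m)
    (hsym : ∀ t, t ≤ s → e (s-t) = e t)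
    (hmono : ∀ t, 2*t+2 ≤ s+1 → e t ≤ e (t+1))
    (hF : ∀ t, 2*t ≤ s+1 → 0 ≤ ∑ m ∈ Finset.Ico t (s+1-t), f m) :
    ∀ d t, 2*t + d = s+1 →
      e t * (∑ m ∈ Finset.Ico t (s+1-t), f m) ≤ ∑ m ∈ Finset.Ico t (s+1-t), e m * f m := by
  intro d
  induction d using Nat.strong_induction_on with
  | _ d ih =>
    match d, ih with
    | 0, ih =>
      intro t hts
      rw [show s+1-t = t from by omega]
      simp
    | 1, ih =>
      intro t hts
      rw [show s+1-t = t+1 from by omega]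
      rw [Finset.sum_Ico_succ_top (le_refl t), Finset.sum_Ico_succ_top (le_refl t)]
      simp
    | (n+2), ih =>
      intro t hts
      rw [show s+1-t = t+n+2 from by omega]
      have hb1 : t < t+n+2 := by omega
      rw [Finset.sum_eq_sum_Ico_succ_bot hb1, Finset.sum_eq_sum_Ico_succ_bot hb1]
      rw [show t+n+2 = (t+n+1)+1 from by omega]
      rw [Finset.sum_Ico_succ_top (by omega : t+1 ≤ t+n+1),
          Finset.sum_Ico_succ_top (by omega : t+1 ≤ t+n+1)]
      have hsymm : e (t+n+1) = e t := by
        have h := hsym t (by omega)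
        rw [show s - t = t+n+1 from by omega] at h
        exact h
      have hih := ih n (by omega) (t+1) (by omega)
      rw [show s+1-(t+1) = t+n+1 from by omega] at hih
      have hF1 : 0 ≤ ∑ m ∈ Finset.Ico (t+1) (t+n+1), f m := by
        have h := hF (t+1) (by omega)
        rwa [show s+1-(t+1) = t+n+1 from by omega] at h
      have hm : e t ≤ e (t+1) := hmono t (by omega)
      have hkey : e t * (∑ m ∈ Finset.Ico (t+1) (t+n+1), f m)
          ≤ ∑ m ∈ Finset.Ico (t+1) (t+n+1), e m * f m :=
        le_trans (mul_le_mul_of_nonneg_right hm hF1) hih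
      rw [hsymm]
      nlinarith [hkey]

theorem stmt_7 (P : Polynomial ℝ) (hnn : NonnegCoeffs P)
    (hlc : LogConcavePoly P) (hiz : NoInternalZeros P)
    (r : ℝ) (hr : 0 < r) :
    LogConcavePoly (P.comp (X + C r)) := by
  intro k
  set N : ℕ := P.natDegree + 1 with hN
  set a : ℕ → ℝ := fun n => P.coeff n * r^n with ha
  have ha0 : ∀ n, 0 ≤ a n := fun n => mul_nonneg (hnn n) (pow_nonneg hr.le n)
  have havan : ∀ n, N ≤ n → a n = 0 := by
    intro n hn
    have hc : P.coeff n = 0 := P.coeff_eq_zero_of_natDegree_lt (by omega)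
    simp [ha, hc]
  have halc : ∀ j, a j * a (j+2) ≤ a (j+1)^2 := by
    intro j
    calc a j * a (j+2) = (P.coeff j * P.coeff (j+2)) * (r^(j+1))^2 := by
          simp only [ha]; ring
      _ ≤ (P.coeff (j+1))^2 * (r^(j+1))^2 :=
          mul_le_mul_of_nonneg_right (hlc j) (by positivity)
      _ = a (j+1)^2 := by simp only [ha]; ring
  have haiz : ∀ i j l, i ≤ j → j ≤ l → a i ≠ 0 → a l ≠ 0 → a j ≠ 0 := by
    intro i j l hij hjl hi hl
    have hrj : r^j ≠ 0 := (pow_pos hr j).ne'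
    have hcj : P.coeff j ≠ 0 :=
      hiz i j l hij hjl (fun h => hi (by simp [ha, h])) (fun h => hl (by simp [ha, h]))
    exact mul_ne_zero hcj hrj
  set M : ℕ := N + k + 2 with hM
  set B : ℕ → ℝ := fun j => ∑ n ∈ Finset.range M, a n * (n.choose j : ℝ) with hB
  -- bridge
  have hbridge : ∀ j, j ≤ k + 2 → (P.comp (X + C r)).coeff j * r^j = B j := by
    intro j hj
    rw [← taylor_apply, taylor_coeff]
    rw [Polynomial.eval_eq_sum_range'
      (by rw [Polynomial.natDegree_hasseDeriv]; omega : ((hasseDeriv j) P).natDegree < N) r]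
    simp only [Polynomial.hasseDeriv_coeff]
    rw [Finset.sum_mul]
    have hBj : B j = ∑ n ∈ Finset.range M, a n * (n.choose j : ℝ) := rfl
    have hrhs : B j = ∑ i ∈ Finset.range N, a (j+i) * (((j+i).choose j : ℕ) : ℝ) := by
      rw [hBj, show M = j + (N + (k+2-j)) from by omega,
        Finset.sum_range_add (fun n => a n * (n.choose j : ℝ)) j (N + (k+2-j))]
      have h1 : ∑ n ∈ Finset.range j, a n * (n.choose j : ℝ) = 0 :=
        Finset.sum_eq_zero (fun n hn => by
          rw [Nat.choose_eq_zero_of_lt (Finset.mem_range.mp hn)]; simp)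
      rw [h1, zero_add,
        Finset.sum_range_add (fun x => a (j+x) * ((j+x).choose j : ℝ)) N (k+2-j)]
      have h2 : ∑ i ∈ Finset.range (k+2-j), a (j+(N+i)) * (((j+(N+i)).choose j : ℕ) : ℝ) = 0 :=
        Finset.sum_eq_zero (fun i _ => by rw [havan _ (by omega)]; simp)
      rw [h2, add_zero]
    rw [hrhs]
    apply Finset.sum_congr rfl
    intro i _
    rw [show j+i = i+j from by omega]
    simp only [ha]
    ring
  -- the kernel
  set f : ℕ → ℕ → ℝ := fun s m =>
    (m.choose (k+1) : ℝ) * ((s-m).choose (k+1) : ℝ)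
      - (m.choose k : ℝ) * ((s-m).choose (k+2) : ℝ) with hf
  set h : ℕ × ℕ → ℝ := fun p =>
    (a p.1 * a p.2) * ((p.1.choose (k+1) : ℝ) * (p.2.choose (k+1) : ℝ)
      - (p.1.choose k : ℝ) * (p.2.choose (k+2) : ℝ)) with hh
  -- expansion
  have hexpand : B (k+1)^2 - B k * B (k+2) = ∑ p ∈ Finset.range M ×ˢ Finset.range M, h p := by
    rw [Finset.sum_product]
    simp only [hB, hh, sq, Finset.sum_mul_sum, ← Finset.sum_sub_distrib]
    apply Finset.sum_congr rfl
    intro m _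
    apply Finset.sum_congr rfl
    intro n _
    ring
  -- reindex to antidiagonals
  have hreindex : ∑ p ∈ Finset.range M ×ˢ Finset.range M, h p
      = ∑ s ∈ Finset.range (2*M), ∑ m ∈ Finset.range (s+1), (a m * a (s-m)) * f s m := by
    have hstep1 : ∑ p ∈ Finset.range M ×ˢ Finset.range M, h p
        = ∑ p ∈ (Finset.range (2*M) ×ˢ Finset.range (2*M)).filter
            (fun p => p.1 + p.2 < 2*M), h p := by
      apply Finset.sum_subset
      · intro p hp
        rw [Finset.mem_product, Finset.mem_range, Finset.mem_range] at hp
        rw [Finset.mem_filter, Finset.mem_product, Finset.mem_range, Finset.mem_range]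
        omega
      · intro p hp hnp
        rw [Finset.mem_filter, Finset.mem_product, Finset.mem_range, Finset.mem_range] at hp
        rw [Finset.mem_product, Finset.mem_range, Finset.mem_range] at hnp
        have : a p.1 = 0 ∨ a p.2 = 0 := by
          rcases not_and_or.mp hnp with h1 | h1
          · exact Or.inl (havan _ (by omega))
          · exact Or.inr (havan _ (by omega))
        rcases this with h1 | h1 <;> simp [hh, h1]
    rw [hstep1,
      Finset.sum_sigma' (Finset.range (2*M)) (fun s => Finset.range (s+1))
      (fun s m => (a m * a (s-m)) * f s m)]
    apply Finset.sum_nbij' (i := fun p => (⟨p.1 + p.2, p.1⟩ : Σ _ : ℕ, ℕ))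
      (j := fun q => (q.2, q.1 - q.2))
    · intro p hp
      rw [Finset.mem_filter, Finset.mem_product, Finset.mem_range, Finset.mem_range] at hp
      simp only [Finset.mem_sigma, Finset.mem_range]
      omega
    · intro q hq
      simp only [Finset.mem_sigma, Finset.mem_range] at hq
      simp only [Finset.mem_filter, Finset.mem_product, Finset.mem_range]
      omega
    · intro p hp
      simp only [Nat.add_sub_cancel_left]
    · intro q hq
      simp only [Finset.mem_sigma, Finset.mem_range] at hq
      obtain ⟨s, m⟩ := q
      simp only at hq ⊢
      have hm : m + (s - m) = s := by omega
      simp [hm]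
    · intro p hp
      simp only [hh, hf, Nat.add_sub_cancel_left]
  -- per-antidiagonal nonnegativity
  have hTs : ∀ s, 0 ≤ ∑ m ∈ Finset.range (s+1), (a m * a (s-m)) * f s m := by
    intro s
    set e : ℕ → ℝ := fun m => a m * a (s-m) with he
    have he0 : ∀ m, 0 ≤ e m := fun m => mul_nonneg (ha0 _) (ha0 _)
    have hsym : ∀ t, t ≤ s → e (s-t) = e t := by
      intro t ht
      simp only [he]
      rw [Nat.sub_sub_self ht, mul_comm]
    have hmono : ∀ t, 2*t+2 ≤ s+1 → e t ≤ e (t+1) := by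
      intro t ht
      exact emonoL a ha0 halc haiz s t ht
    have hFs : ∀ t, 2*t ≤ s+1 → 0 ≤ ∑ m ∈ Finset.Ico t (s+1-t), f s m := by
      intro t ht
      exact Fnonneg k s t ht
    have habel := abelL s e (f s) he0 hsym hmono hFs (s+1) 0 (by omega)
    rw [Nat.sub_zero] at habel
    have hF0 := hFs 0 (by omega)
    rw [Nat.sub_zero] at hF0
    rw [Finset.range_eq_Ico]
    calc (0:ℝ) ≤ e 0 * (∑ m ∈ Finset.Ico 0 (s+1), f s m) := mul_nonneg (he0 0) hF0
      _ ≤ ∑ m ∈ Finset.Ico 0 (s+1), e m * f s m := habel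
      _ = ∑ m ∈ Finset.Ico 0 (s+1), (a m * a (s-m)) * f s m := rfl
  have hmain : B k * B (k+2) ≤ B (k+1)^2 := by
    have h1 : 0 ≤ B (k+1)^2 - B k * B (k+2) := by
      rw [hexpand, hreindex]
      exact Finset.sum_nonneg (fun s _ => hTs s)
    linarith
  -- conclude
  have h0 := hbridge k (by omega)
  have h1 := hbridge (k+1) (by omega)
  have h2 := hbridge (k+2) (by omega)
  set c : ℕ → ℝ := fun j => (P.comp (X + C r)).coeff j with hc
  have hfin : (c k * c (k+2)) * r^(2*k+2) ≤ (c (k+1))^2 * r^(2*k+2) := by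
    calc (c k * c (k+2)) * r^(2*k+2) = (c k * r^k) * (c (k+2) * r^(k+2)) := by ring
      _ = B k * B (k+2) := by rw [h0, h2]
      _ ≤ B (k+1)^2 := hmain
      _ = (c (k+1) * r^(k+1))^2 := by rw [h1]
      _ = (c (k+1))^2 * r^(2*k+2) := by ring
  exact le_of_mul_le_mul_right hfin (pow_pos hr (2*k+2))
end

section
/- For all positive integers t \le n, the polynomial (1+x)^t + (1+x)^n - 1 has a log-concave coefficient sequence. -/
open Polynomial

lemma upId (m s : ℕ) : (m+1).choose (s+2) * (s+2) = (m+1) * m.choose (s+1) := by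
  have := Nat.add_one_mul_choose_eq m (s+1)
  simpa [Nat.succ_eq_add_one, mul_comm] using this.symm

lemma lemL (α d : ℕ) : ∀ s, (α+1+d) * ((α+s+1).choose (s+1)) ≤ (α+1) * ((α+d+s+1).choose (s+1)) := by
  intro s
  induction s with
  | zero => simp [Nat.choose_one_right]; ring_nf; omega
  | succ s ih =>
    refine Nat.le_of_mul_le_mul_right ?_ (Nat.succ_pos (s+1))
    have h1 : (α+s+2).choose (s+2) * (s+2) = (α+s+2) * (α+s+1).choose (s+1) := upId (α+s+1) s
    have h2 : (α+d+s+2).choose (s+2) * (s+2) = (α+d+s+2) * (α+d+s+1).choose (s+1) := upId (α+d+s+1) s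
    calc (α+1+d) * ((α+s+2).choose (s+2)) * (s+2)
        = (α+1+d) * ((α+s+2).choose (s+2) * (s+2)) := by ring
      _ = (α+1+d) * ((α+s+2) * (α+s+1).choose (s+1)) := by rw [h1]
      _ ≤ (α+d+s+2) * ((α+1+d) * (α+s+1).choose (s+1)) := by
            rw [show (α+1+d) * ((α+s+2) * (α+s+1).choose (s+1)) = (α+s+2) * ((α+1+d) * (α+s+1).choose (s+1)) by ring]
            exact Nat.mul_le_mul_right _ (by omega)
      _ ≤ (α+d+s+2) * ((α+1) * (α+d+s+1).choose (s+1)) := Nat.mul_le_mul_left _ ih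
      _ = (α+1) * ((α+d+s+2) * (α+d+s+1).choose (s+1)) := by ring
      _ = (α+1) * ((α+d+s+2).choose (s+2)) * (s+2) := by rw [← h2]; ring

lemma claimN (α d : ℕ) : ∀ s, (s+1) * d^2 * ((α+s+1).choose (s+1)) ≤
    (α+1)*(α+1+d) * ((α+s+1).choose (s+1)) + (α+1)*(α+d+s+2) * ((α+d+s+1).choose (s+1)) := by
  intro s
  induction s with
  | zero =>
    simp only [Nat.add_zero, Nat.zero_add, Nat.choose_one_right]
    have h : d^2 ≤ (α+d+2)*(α+d+1) := by nlinarith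
    have h2 : (α+1) * d^2 ≤ (α+1) * ((α+d+2)*(α+d+1)) := Nat.mul_le_mul_left _ h
    nlinarith [h2, Nat.zero_le ((α+1)*(α+1+d)*(α+1))]
  | succ s ih =>
    refine Nat.le_of_mul_le_mul_right ?_ (Nat.succ_pos (s+1))
    have h1 : (α+s+2).choose (s+2) * (s+2) = (α+s+2) * (α+s+1).choose (s+1) := upId (α+s+1) s
    have h2 : (α+d+s+2).choose (s+2) * (s+2) = (α+d+s+2) * (α+d+s+1).choose (s+1) := upId (α+d+s+1) s
    set X := (α+s+1).choose (s+1) with hX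
    set Y := (α+d+s+1).choose (s+1) with hY
    have hL : (α+1+d) * X ≤ (α+1) * Y := lemL α d s
    have step : d^2*((α+s+2)*X) ≤ (α+1)*((d+1)*(α+d+s+2))*Y := by
      calc d^2*((α+s+2)*X) ≤ (d*(α+s+2))*((α+1+d)*X) := by
              rw [show d^2*((α+s+2)*X) = (d*(α+s+2))*(d*X) by ring]
              exact Nat.mul_le_mul_left _ (Nat.mul_le_mul_right _ (by omega))
        _ ≤ (d*(α+s+2))*((α+1)*Y) := Nat.mul_le_mul_left _ hL
        _ ≤ ((d+1)*(α+d+s+2))*((α+1)*Y) := Nat.mul_le_mul_right _ (by nlinarith)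
        _ = (α+1)*((d+1)*(α+d+s+2))*Y := by ring
    have ihm : (α+s+2) * ((s+1) * d^2 * X) ≤
        (α+s+2) * ((α+1)*(α+1+d)*X + (α+1)*(α+d+s+2)*Y) := Nat.mul_le_mul_left _ ih
    calc (s+1+1) * d^2 * ((α+s+2).choose (s+2)) * (s+2)
        = (s+1+1)*d^2 * ((α+s+2).choose (s+2) * (s+2)) := by ring
      _ = (s+1+1)*d^2 * ((α+s+2) * X) := by rw [h1]
      _ = (α+s+2) * ((s+1) * d^2 * X) + d^2*((α+s+2)*X) := by ring
      _ ≤ ((α+s+2) * ((α+1)*(α+1+d)*X + (α+1)*(α+d+s+2)*Y)) + (α+1)*((d+1)*(α+d+s+2))*Y :=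
            Nat.add_le_add ihm step
      _ = (α+1)*(α+1+d)*((α+s+2)*X) + (α+1)*(α+d+s+3)*((α+d+s+2)*Y) := by ring
      _ = (α+1)*(α+1+d)*((α+s+2).choose (s+2) * (s+2)) + (α+1)*(α+d+s+3)*((α+d+s+2).choose (s+2) * (s+2)) := by rw [h1, h2]
      _ = ((α+1)*(α+1+d)*((α+s+2).choose (s+2)) + (α+1)*(α+d+(s+1)+2)*((α+d+s+2).choose (s+2))) * (s+2) := by ring_nf

lemma rowLC (n k : ℕ) : n.choose k * n.choose (k+2) ≤ n.choose (k+1)^2 := by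
  refine Nat.le_of_mul_le_mul_right ?_ (Nat.succ_pos (k+1))
  have h1 := Nat.choose_succ_right_eq n (k+1)
  have h2 := Nat.choose_succ_right_eq n k
  calc n.choose k * n.choose (k+2) * (k+2) = n.choose k * (n.choose (k+2) * (k+2)) := by ring
    _ = n.choose k * (n.choose (k+1) * (n - (k+1))) := by rw [h1]
    _ ≤ n.choose k * (n.choose (k+1) * (n - k)) :=
        Nat.mul_le_mul_left _ (Nat.mul_le_mul_left _ (Nat.sub_le_sub_left (by omega) n))
    _ = n.choose (k+1) * (n.choose k * (n-k)) := by ring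
    _ = n.choose (k+1) * (n.choose (k+1) * (k+1)) := by rw [← h2]
    _ = n.choose (k+1)^2 * (k+1) := by ring
    _ ≤ n.choose (k+1)^2 * (k+2) := Nat.mul_le_mul_left _ (by omega)

lemma mainR (α d k A0 A1 A2 B0 B1 B2 : ℝ)
    (h0 : 0 ≤ A1) (h0' : 0 ≤ B1) (hα : 0 ≤ α) (hd : 0 ≤ d) (hkk : 0 ≤ k)
    (ri1 : A1*(k+1) = A0*(α+1)) (ri2 : B1*(k+1) = B0*(α+d+1))
    (ri3 : A2*(k+2) = A1*α) (ri4 : B2*(k+2) = B1*(α+d))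
    (rcl : (k+1)*d^2*A1 ≤ (α+1)*(α+1+d)*A1 + (α+1)*(α+d+k+2)*B1) :
    (A0+B0)*(A2+B2) ≤ (A1+B1)^2 := by
  have hM : (0:ℝ) < (α+1)*((α+d+1)*(k+2)) := by positivity
  refine le_of_mul_le_mul_right ?_ hM
  have eL : (A0+B0)*((α+1)*(α+d+1)) = (k+1)*(A1*(α+d+1)+B1*(α+1)) := by
    linear_combination (-(α+d+1))*ri1 - (α+1)*ri2
  have eR : (A2+B2)*(k+2) = A1*α + B1*(α+d) := by linear_combination ri3 + ri4
  have hintS : 0 ≤ B1 * ((α+1)*(α+1+d)*A1 + (α+1)*(α+d+k+2)*B1 - (k+1)*d^2*A1) :=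
    mul_nonneg h0' (by linarith)
  have hintA : 0 ≤ A1^2 * ((α+d+1)*(α+k+2)) := by positivity
  have hintAB : 0 ≤ (A1*B1) * ((α+1)*(α+d+1) + (k+1)*(2*α+d+2)) := by positivity
  calc (A0+B0)*(A2+B2)*((α+1)*((α+d+1)*(k+2)))
      = ((A0+B0)*((α+1)*(α+d+1))) * ((A2+B2)*(k+2)) := by ring
    _ = ((k+1)*(A1*(α+d+1)+B1*(α+1))) * (A1*α + B1*(α+d)) := by rw [eL, eR]
    _ ≤ (A1+B1)^2*((α+1)*((α+d+1)*(k+2))) := by nlinarith [hintS, hintA, hintAB]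

lemma masterN (t n k : ℕ) (htn : t ≤ n) :
    (t.choose k + n.choose k) * (t.choose (k+2) + n.choose (k+2)) ≤
      (t.choose (k+1) + n.choose (k+1))^2 := by
  rcases Nat.lt_trichotomy k t with hk | hk | hk
  · -- main case k < t
    obtain ⟨α, rfl⟩ : ∃ α, t = α+k+1 := ⟨t-k-1, by omega⟩
    obtain ⟨d, rfl⟩ : ∃ d, n = α+d+k+1 := ⟨n-(α+k+1), by omega⟩
    have i1 : (α+k+1).choose (k+1) * (k+1) = (α+k+1).choose k * (α+1) := by
      rw [Nat.choose_succ_right_eq]; congr 1; omega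
    have i2 : (α+d+k+1).choose (k+1) * (k+1) = (α+d+k+1).choose k * (α+d+1) := by
      rw [Nat.choose_succ_right_eq]; congr 1; omega
    have i3 : (α+k+1).choose (k+2) * (k+2) = (α+k+1).choose (k+1) * α := by
      rw [Nat.choose_succ_right_eq]; congr 1; omega
    have i4 : (α+d+k+1).choose (k+2) * (k+2) = (α+d+k+1).choose (k+1) * (α+d) := by
      rw [Nat.choose_succ_right_eq]; congr 1; omega
    have hcl := claimN α d k
    have goalR := mainR (α:ℝ) (d:ℝ) (k:ℝ)
      ((α+k+1).choose k : ℝ) ((α+k+1).choose (k+1) : ℝ) ((α+k+1).choose (k+2) : ℝ)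
      ((α+d+k+1).choose k : ℝ) ((α+d+k+1).choose (k+1) : ℝ) ((α+d+k+1).choose (k+2) : ℝ)
      (by positivity) (by positivity) (by positivity) (by positivity) (by positivity)
      (by exact_mod_cast congrArg (Nat.cast (R := ℝ)) i1)
      (by exact_mod_cast congrArg (Nat.cast (R := ℝ)) i2)
      (by exact_mod_cast congrArg (Nat.cast (R := ℝ)) i3)
      (by exact_mod_cast congrArg (Nat.cast (R := ℝ)) i4)
      (by exact_mod_cast hcl)
    exact_mod_cast goalR
  · -- k = t
    subst hk
    rcases eq_or_lt_of_le htn with rfl | hn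
    · simp [Nat.choose_eq_zero_of_lt (show k < k+2 by omega)]
    · obtain ⟨m, rfl⟩ : ∃ m, n = k+m+1 := ⟨n-k-1, by omega⟩
      have iB0 : (k+m+1).choose (k+1) * (k+1) = (k+m+1).choose k * (m+1) := by
        rw [Nat.choose_succ_right_eq]; congr 1; omega
      have iB2 : (k+m+1).choose (k+2) * (k+2) = (k+m+1).choose (k+1) * m := by
        rw [Nat.choose_succ_right_eq]; congr 1; omega
      have hB1 : m+1 ≤ (k+m+1).choose (k+1) := by
        have h1 : (k+m+1).choose (k+1) = (k+m+1).choose m := by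
          rw [← Nat.choose_symm (show k+1 ≤ k+m+1 by omega)]; congr 1; omega
        have h2 : (m+1).choose m ≤ (k+m+1).choose m := Nat.choose_le_choose m (by omega)
        rw [h1]; simpa [Nat.choose_succ_self_right] using h2
      have z1 : k.choose (k+1) = 0 := Nat.choose_eq_zero_of_lt (by omega)
      have z2 : k.choose (k+2) = 0 := Nat.choose_eq_zero_of_lt (by omega)
      rw [Nat.choose_self, z1, z2, Nat.zero_add, Nat.zero_add]
      set B0 := (k+m+1).choose k
      set B1 := (k+m+1).choose (k+1)
      set B2 := (k+m+1).choose (k+2)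
      refine Nat.le_of_mul_le_mul_right ?_ (show 0 < (m+1)*(k+2) by positivity)
      have key : m*(m+1) ≤ (m+k+2)*B1 := by
        calc m*(m+1) ≤ (m+k+2)*(m+1) := Nat.mul_le_mul_right _ (by omega)
          _ ≤ (m+k+2)*B1 := Nat.mul_le_mul_left _ hB1
      calc (1 + B0) * B2 * ((m+1)*(k+2))
          = (B2*(k+2))*(m+1) + (B0*(m+1))*(B2*(k+2)) := by ring
        _ = (B1*m)*(m+1) + (B1*(k+1))*(B1*m) := by rw [iB0, iB2]
        _ = B1*(m*(m+1)) + B1^2*(m*(k+1)) := by ring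
        _ ≤ B1*((m+k+2)*B1) + B1^2*(m*(k+1)) := Nat.add_le_add_right (Nat.mul_le_mul_left _ key) _
        _ = B1^2 * ((m+1)*(k+2)) := by ring
  · -- t < k
    have z0 : t.choose k = 0 := Nat.choose_eq_zero_of_lt hk
    have z1 : t.choose (k+1) = 0 := Nat.choose_eq_zero_of_lt (by omega)
    have z2 : t.choose (k+2) = 0 := Nat.choose_eq_zero_of_lt (by omega)
    simp only [z0, z1, z2, Nat.zero_add]
    exact rowLC n k

theorem stmt_11 (t n : ℕ) (ht : 1 ≤ t) (htn : t ≤ n) :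
    LogConcavePoly ((1 + X) ^ t + (1 + X) ^ n - 1) := by
  intro k
  have hco : ∀ j : ℕ, ((1 + X : ℝ[X]) ^ t + (1 + X) ^ n - 1).coeff j =
      (t.choose j : ℝ) + n.choose j - (if j = 0 then 1 else 0) := by
    intro j
    rw [coeff_sub, coeff_add, coeff_one_add_X_pow, coeff_one_add_X_pow, coeff_one]
  rw [hco, hco, hco]
  have hmaster := masterN t n k htn
  rcases Nat.eq_zero_or_pos k with rfl | hkpos
  · simp only [if_pos rfl, if_neg (by norm_num : (1:ℕ) ≠ 0), if_neg (by norm_num : (2:ℕ) ≠ 0), Nat.choose_zero_right, Nat.cast_one]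
    have h2 : (t.choose 2 + n.choose 2 : ℝ) ≤ ((t.choose 1 + n.choose 1 : ℕ) : ℝ)^2 := by
      have : 2 * (t.choose 2 + n.choose 2) ≤ (t.choose 1 + n.choose 1)^2 := by
        have := masterN t n 0 htn
        simpa [Nat.choose_zero_right] using this
      have hle : t.choose 2 + n.choose 2 ≤ (t.choose 1 + n.choose 1)^2 := by omega
      exact_mod_cast hle
    push_cast at h2 ⊢
    nlinarith [h2, (show (0:ℝ) ≤ t.choose 2 by positivity), (show (0:ℝ) ≤ n.choose 2 by positivity)]
  · have h0 : k ≠ 0 := by omega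
    have h1 : k + 1 ≠ 0 := by omega
    have h2 : k + 2 ≠ 0 := by omega
    simp only [if_neg h0, if_neg h1, if_neg h2, sub_zero]
    exact_mod_cast hmaster
end

section
/- If t \le n are positive integers, then (1+x)^t + (1+x)^n = (1+x)^t (1 + (1+x)^{n-t}), and this polynomial has a log-concave coefficient sequence. -/
open Polynomial

lemma choose_logconcave (m k : ℕ) :
    m.choose k * m.choose (k + 2) ≤ m.choose (k + 1) ^ 2 := by
  have h1 : m.choose (k + 1) * (k + 1) = m.choose k * (m - k) :=
    Nat.choose_succ_right_eq m k
  have h2 : m.choose (k + 2) * (k + 2) = m.choose (k + 1) * (m - (k + 1)) :=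
    Nat.choose_succ_right_eq m (k + 1)
  have hsub : m - (k + 1) ≤ m - k := Nat.sub_le_sub_left (by omega) m
  have key : m.choose k * m.choose (k + 2) * ((k + 1) * (k + 2)) ≤
      m.choose (k + 1) ^ 2 * ((k + 1) * (k + 2)) := by
    calc m.choose k * m.choose (k + 2) * ((k + 1) * (k + 2))
        = (m.choose k * (k + 1)) * (m.choose (k + 2) * (k + 2)) := by ring
      _ = (m.choose k * (k + 1)) * (m.choose (k + 1) * (m - (k + 1))) := by rw [h2]
      _ ≤ (m.choose k * (k + 2)) * (m.choose (k + 1) * (m - k)) := by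
          apply Nat.mul_le_mul <;> apply Nat.mul_le_mul <;> omega
      _ = (m.choose (k + 1) * (k + 1)) * (m.choose (k + 1) * (k + 2)) := by
          rw [h1]; ring
      _ = m.choose (k + 1) ^ 2 * ((k + 1) * (k + 2)) := by ring
  exact Nat.le_of_mul_le_mul_right key (by positivity)

lemma step (a b : ℕ → ℝ) (d : ℕ)
    (hpos : ∀ k ≤ d, 0 < a k) (hzero : ∀ k, d < k → a k = 0)
    (hlc : ∀ k, a k * a (k + 2) ≤ a (k + 1) ^ 2)
    (hb0 : b 0 = a 0) (hbs : ∀ k, b (k + 1) = a (k + 1) + a k) :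
    (∀ k ≤ d + 1, 0 < b k) ∧ (∀ k, d + 1 < k → b k = 0) ∧
      (∀ k, b k * b (k + 2) ≤ b (k + 1) ^ 2) := by
  have hnn : ∀ k, 0 ≤ a k := by
    intro k
    rcases le_or_gt k d with h | h
    · exact (hpos k h).le
    · exact (hzero k h).ge
  refine ⟨?_, ?_, ?_⟩
  · intro k hk
    cases k with
    | zero => rw [hb0]; exact hpos 0 (Nat.zero_le d)
    | succ j =>
        rw [hbs]
        have : 0 < a j := hpos j (by omega)
        have := hnn (j + 1)
        linarith
  · intro k hk
    cases k with
    | zero => omega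
    | succ j =>
        rw [hbs, hzero (j + 1) (by omega), hzero j (by omega)]; ring
  · intro k
    cases k with
    | zero =>
        rw [hb0, hbs, hbs]
        have h0 := hlc 0
        have := hnn 0; have := hnn 1; have := hnn 2
        nlinarith
    | succ j =>
        rw [hbs, hbs, hbs]
        have h1 := hlc j
        have h2 := hlc (j + 1)
        have hcross : a j * a (j + 3) ≤ a (j + 1) * a (j + 2) := by
          rcases eq_or_lt_of_le (mul_nonneg (hnn (j + 1)) (hnn (j + 2))) with h | h
          · -- a (j+1) * a (j+2) = 0
            have hz : a (j + 3) = 0 := by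
              rcases mul_eq_zero.mp h.symm with h' | h'
              · apply hzero
                by_contra hc
                exact (hpos (j + 1) (by omega)).ne' h'
              · apply hzero
                by_contra hc
                exact (hpos (j + 2) (by omega)).ne' h'
            rw [hz, mul_zero, ← h]
          · have hmul : (a j * a (j + 3)) * (a (j + 1) * a (j + 2)) ≤
                (a (j + 1) * a (j + 2)) ^ 2 := by
              have := mul_le_mul h1 h2 (mul_nonneg (hnn (j + 1)) (hnn (j + 3)))
                (sq_nonneg _)
              calc (a j * a (j + 3)) * (a (j + 1) * a (j + 2))
                  = (a j * a (j + 2)) * (a (j + 1) * a (j + 3)) := by ring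
                _ ≤ a (j + 1) ^ 2 * a (j + 2) ^ 2 := this
                _ = (a (j + 1) * a (j + 2)) ^ 2 := by ring
            have := le_of_mul_le_mul_right (by nlinarith : (a j * a (j + 3)) *
              (a (j + 1) * a (j + 2)) ≤ (a (j + 1) * a (j + 2)) * (a (j + 1) * a (j + 2))) h
            exact this
        have := hnn j; have := hnn (j + 1); have := hnn (j + 2); have := hnn (j + 3)
        nlinarith

lemma main_seq (m : ℕ) : ∀ t : ℕ,
    (∀ k ≤ t + m, 0 < ((t.choose k : ℝ) + ((t + m).choose k : ℝ))) ∧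
    (∀ k, t + m < k → ((t.choose k : ℝ) + ((t + m).choose k : ℝ)) = 0) ∧
    (∀ k, ((t.choose k : ℝ) + ((t + m).choose k : ℝ)) *
        ((t.choose (k + 2) : ℝ) + ((t + m).choose (k + 2) : ℝ)) ≤
      ((t.choose (k + 1) : ℝ) + ((t + m).choose (k + 1) : ℝ)) ^ 2) := by
  intro t
  induction t with
  | zero =>
      refine ⟨?_, ?_, ?_⟩
      · intro k hk
        simp only [Nat.zero_add] at hk ⊢
        have : 0 < m.choose k := Nat.choose_pos hk
        have : (0:ℝ) < (m.choose k : ℝ) := by exact_mod_cast this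
        have : (0:ℝ) ≤ (Nat.choose 0 k : ℝ) := by positivity
        linarith
      · intro k hk
        simp only [Nat.zero_add] at hk ⊢
        rw [Nat.choose_eq_zero_of_lt (by omega), Nat.choose_eq_zero_of_lt hk]
        norm_num
      · intro k
        simp only [Nat.zero_add]
        cases k with
        | zero =>
            simp only [Nat.choose_zero_right, Nat.choose_one_right]
            rw [Nat.choose_eq_zero_of_lt (by omega : 0 < 1),
              Nat.choose_eq_zero_of_lt (by omega : 0 < 2)]
            have h2 : m.choose 2 * 2 = m * (m - 1) := by
              have := Nat.choose_succ_right_eq m 1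
              simpa using this
            have hN : 2 * m.choose 2 ≤ m ^ 2 := by
              have : m * (m - 1) ≤ m * m := Nat.mul_le_mul_left m (Nat.sub_le m 1)
              nlinarith
            have hR : (2:ℝ) * (m.choose 2 : ℝ) ≤ (m : ℝ) ^ 2 := by exact_mod_cast hN
            have hc1 : (m.choose 1 : ℝ) = (m : ℝ) := by simp
            push_cast
            nlinarith [hc1]
        | succ j =>
            rw [Nat.choose_eq_zero_of_lt (by omega : 0 < j + 1),
              Nat.choose_eq_zero_of_lt (by omega : 0 < j + 2),
              Nat.choose_eq_zero_of_lt (by omega : 0 < j + 3)]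
            have := choose_logconcave m (j + 1)
            have : ((m.choose (j + 1) : ℝ)) * (m.choose (j + 3) : ℝ) ≤
                (m.choose (j + 2) : ℝ) ^ 2 := by exact_mod_cast this
            push_cast
            linarith
  | succ s ih =>
      obtain ⟨hpos, hzero, hlc⟩ := ih
      have hres := step (fun k => (s.choose k : ℝ) + ((s + m).choose k : ℝ))
        (fun k => ((s + 1).choose k : ℝ) + ((s + 1 + m).choose k : ℝ)) (s + m)
        hpos hzero hlc
        (by simp)
        (by
          intro k
          have e1 : (s + 1).choose (k + 1) = s.choose k + s.choose (k + 1) :=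
            Nat.choose_succ_succ s k
          have e2 : (s + 1 + m).choose (k + 1) = (s + m).choose k + (s + m).choose (k + 1) := by
            have h : s + 1 + m = (s + m) + 1 := by omega
            rw [h]
            exact Nat.choose_succ_succ (s + m) k
          rw [e1, e2]
          push_cast
          ring)
      obtain ⟨h1, h2, h3⟩ := hres
      refine ⟨?_, ?_, h3⟩
      · intro k hk; exact h1 k (by omega)
      · intro k hk; exact h2 k (by omega)

theorem stmt_12 (t n : ℕ) (ht : 1 ≤ t) (htn : t ≤ n) :
    ((1 + X : Polynomial ℝ) ^ t + (1 + X) ^ n =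
      (1 + X) ^ t * (1 + (1 + X) ^ (n - t))) ∧
    LogConcavePoly ((1 + X) ^ t + (1 + X) ^ n) := by
  constructor
  · rw [mul_add, mul_one, ← pow_add, Nat.add_sub_cancel' htn]
  · intro k
    have hco : ∀ j : ℕ, ((1 + X : Polynomial ℝ) ^ t + (1 + X) ^ n).coeff j =
        (t.choose j : ℝ) + (n.choose j : ℝ) := by
      intro j
      rw [coeff_add, coeff_one_add_X_pow, coeff_one_add_X_pow]
    rw [hco, hco, hco]
    have := (main_seq (n - t) t).2.2 k
    rwa [Nat.add_sub_cancel' htn] at this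
end

section
/- If a polynomial f(x) = \prod_{i=1}^{m}(1 + a_i x) with all a_i > 0, and q \ge m, and a, b \ge 0 are reals such that ax^2 + bx + 1 has only real zeros, and p(x) is a polynomial with positive coefficients having only real zeros, then p(x)^{q-m} \prod_{i=1}^{m} (a x^2 + (b + a_i) x + 1) has only real zeros. -/
open Polynomial

def OnlyRealZeros (P : Polynomial ℝ) : Prop :=
  ∀ z : ℂ, Polynomial.aeval z P = 0 → z.im = 0

/-! Each factor `a x² + (b + aᵢ) x + 1` has discriminant `(b + aᵢ)² - 4a ≥ b² - 4a ≥ 0`, and a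
quadratic with constant term `1` has only real zeros exactly when its discriminant is nonnegative
(for `a = 0` it is linear, and `4a ≤ b²` holds trivially). Real-rootedness is preserved by
products and powers. -/

namespace OnlyRealZeros

lemma mul {P Q : ℝ[X]} (hP : OnlyRealZeros P) (hQ : OnlyRealZeros Q) :
    OnlyRealZeros (P * Q) := fun z hz =>
  (mul_eq_zero.mp ((map_mul _ P Q).symm.trans hz)).elim (hP z) (hQ z)

lemma pow {P : ℝ[X]} (hP : OnlyRealZeros P) (n : ℕ) : OnlyRealZeros (P ^ n) := fun z hz =>
  hP z (eq_zero_of_pow_eq_zero ((map_pow _ P n).symm.trans hz))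

lemma prod {ι : Type*} (s : Finset ι) (P : ι → ℝ[X]) (h : ∀ i ∈ s, OnlyRealZeros (P i)) :
    OnlyRealZeros (∏ i ∈ s, P i) := by
  intro z hz
  rw [map_prod, Finset.prod_eq_zero_iff] at hz
  obtain ⟨i, hi, hzi⟩ := hz
  exact h i hi z hzi

end OnlyRealZeros

lemma aeval_quadratic (a b : ℝ) (z : ℂ) :
    aeval z (C a * X ^ 2 + C b * X + 1) = a * z ^ 2 + b * z + 1 := by
  simp

lemma im_eq_zero_of_quadratic_eq_zero {a b : ℝ} (hdisc : 4 * a ≤ b ^ 2) {z : ℂ}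
    (hz : (a : ℂ) * z ^ 2 + b * z + 1 = 0) : z.im = 0 := by
  have hre : a * (z.re ^ 2 - z.im ^ 2) + b * z.re + 1 = 0 := by
    simpa [sq] using congrArg Complex.re hz
  have him : z.im * (2 * a * z.re + b) = 0 := by
    have := congrArg Complex.im hz
    simp only [sq, Complex.add_im, Complex.mul_im, Complex.mul_re, Complex.ofReal_re,
      Complex.ofReal_im, Complex.one_im, Complex.zero_im] at this
    linear_combination this
  by_contra hs
  have hvertex : 2 * a * z.re + b = 0 := (mul_eq_zero.mp him).resolve_left hs
  -- substituting `2 a Re z = -b` into `4a · hre` gives `4a - b² = 4a² (Im z)²`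
  have hkey : 4 * a - b ^ 2 = 4 * a ^ 2 * z.im ^ 2 := by
    linear_combination 4 * a * hre - (2 * a * z.re + b) * hvertex
  rcases eq_or_ne a 0 with rfl | ha
  · simp only [mul_zero, zero_mul, zero_add] at hvertex hre
    simp [hvertex] at hre
  · have : 0 < 4 * a ^ 2 * z.im ^ 2 := by positivity
    linarith

lemma exists_quadratic_eq_zero_of_lt {a b : ℝ} (hdisc : b ^ 2 < 4 * a) :
    ∃ z : ℂ, (a : ℂ) * z ^ 2 + b * z + 1 = 0 ∧ z.im ≠ 0 := by
  have ha : 0 < a := by nlinarith [sq_nonneg b]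
  set s : ℝ := Real.sqrt (4 * a - b ^ 2)
  have hs : s ^ 2 = 4 * a - b ^ 2 := Real.sq_sqrt (by linarith)
  have hs_pos : 0 < s := Real.sqrt_pos.mpr (by linarith)
  have hdiscrim : discrim (a : ℂ) b 1 = (s * Complex.I) * (s * Complex.I) := by
    have hs' : (s : ℂ) ^ 2 = 4 * a - b ^ 2 := by exact_mod_cast hs
    rw [discrim, ← sq, mul_pow, Complex.I_sq, hs']
    ring
  have ha' : (a : ℂ) ≠ 0 := Complex.ofReal_ne_zero.mpr ha.ne'
  refine ⟨(-b + s * Complex.I) / (2 * a), ?_, ?_⟩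
  · rw [sq, quadratic_eq_zero_iff ha' hdiscrim]
    exact Or.inl rfl
  · have : ((-b + s * Complex.I) / (2 * a) : ℂ) = ((-b / (2 * a) : ℝ) : ℂ)
        + ((s / (2 * a) : ℝ) : ℂ) * Complex.I := by
      push_cast
      field_simp
    rw [this, Complex.add_im, Complex.ofReal_im, Complex.mul_I_im, Complex.ofReal_re]
    positivity

lemma onlyRealZeros_quadratic_iff {a b : ℝ} :
    OnlyRealZeros (C a * X ^ 2 + C b * X + 1) ↔ 4 * a ≤ b ^ 2 := by
  constructor
  · intro h
    by_contra! hlt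
    obtain ⟨z, hz, him⟩ := exists_quadratic_eq_zero_of_lt hlt
    exact him (h z ((aeval_quadratic a b z).trans hz))
  · intro hdisc z hz
    exact im_eq_zero_of_quadratic_eq_zero hdisc ((aeval_quadratic a b z).symm.trans hz)

theorem stmt_14_general (m q : ℕ) (a b : ℝ) (hb : 0 ≤ b)
    (hquad : OnlyRealZeros (C a * X ^ 2 + C b * X + 1))
    (ai : Fin m → ℝ) (hai : ∀ i, 0 < ai i)
    (p : Polynomial ℝ) (hpr : OnlyRealZeros p) :
    OnlyRealZeros (p ^ (q - m) * ∏ i, (C a * X ^ 2 + C (b + ai i) * X + 1)) := by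
  have hdisc : 4 * a ≤ b ^ 2 := onlyRealZeros_quadratic_iff.mp hquad
  refine (hpr.pow _).mul (OnlyRealZeros.prod _ _ fun i _ => ?_)
  rw [onlyRealZeros_quadratic_iff]
  nlinarith [hai i]

theorem stmt_14 (m q : ℕ) (hq : m ≤ q) (a b : ℝ) (ha : 0 ≤ a) (hb : 0 ≤ b)
    (hquad : OnlyRealZeros (C a * X ^ 2 + C b * X + 1))
    (ai : Fin m → ℝ) (hai : ∀ i, 0 < ai i)
    (f : Polynomial ℝ) (hf : f = ∏ i, (1 + C (ai i) * X))
    (p : Polynomial ℝ) (hp : PosCoeffs p) (hpr : OnlyRealZeros p) :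
    OnlyRealZeros (p ^ (q - m) * ∏ i, (C a * X ^ 2 + C (b + ai i) * X + 1)) :=
  stmt_14_general m q a b hb hquad ai hai p hpr
end

section
/- Let f and g be symmetric polynomials with f(0) = g(0) = 1 and deg f = deg g + 2. Then for any polynomial s(y) = \sum_i s_i y^i with real coefficients and any q \ge deg s, the polynomial f(x)^q s(x g(x)/f(x)) (interpreted as f(x)^{q - deg s} \sum_i s_i (x g(x))^i f(x)^{deg s - i}) is symmetric of degree q \cdot deg f. -/
/-! A polynomial of degree at most `n` is symmetric at `n` when `reflect n P = P`, i.e.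
`x^n P(1/x) = P(x)`. Symmetry at `n` is preserved by sums and scalar multiples, and symmetries at
`m` and `n` multiply to one at `m + n`. Since `x g` is symmetric at `deg g + 2 = deg f`, every term
`s_i (x g)^i f^(q-i)` is symmetric at `q deg f`, hence so is their sum. -/

open Polynomial

/-- `a_k = a_{n-k}` for all `0 ≤ k ≤ n = deg P`. -/
def SymmPoly (P : Polynomial ℝ) : Prop :=
  ∀ k ≤ P.natDegree, P.coeff k = P.coeff (P.natDegree - k)

namespace Polynomial

variable {R : Type*} [Semiring R]

theorem reflect_mul_eq_self {p q : R[X]} {m n : ℕ} (hpd : p.natDegree ≤ m)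
    (hqd : q.natDegree ≤ n) (hp : reflect m p = p) (hq : reflect n q = q) :
    reflect (m + n) (p * q) = p * q := by
  rw [reflect_mul p q hpd hqd, hp, hq]

theorem reflect_pow_eq_self {p : R[X]} {n : ℕ} (hpd : p.natDegree ≤ n) (hp : reflect n p = p)
    (k : ℕ) : reflect (k * n) (p ^ k) = p ^ k := by
  induction k with
  | zero => simp [reflect_one]
  | succ k ih =>
    rw [pow_succ, Nat.succ_mul]
    exact reflect_mul_eq_self (natDegree_pow_le.trans (Nat.mul_le_mul_left k hpd)) hpd ih hp

theorem reflect_sum_eq_self {ι : Type*} (t : Finset ι) {p : ι → R[X]} {N : ℕ}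
    (h : ∀ i ∈ t, reflect N (p i) = p i) : reflect N (∑ i ∈ t, p i) = ∑ i ∈ t, p i :=
  Finset.sum_induction p (fun P => reflect N P = P)
    (fun a b ha hb => by rw [reflect_add, ha, hb]) reflect_zero h

theorem reflect_X_mul_eq_self {p : R[X]} {n : ℕ} (hpd : p.natDegree ≤ n)
    (hp : reflect n p = p) : reflect (n + 2) (X * p) = X * p := by
  have hX : reflect 2 (X : R[X]) = X := by
    simpa [revAt_le] using reflect_monomial (R := R) 2 1
  rw [add_comm]
  exact reflect_mul_eq_self (natDegree_X_le.trans (by norm_num)) hpd hX hp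

end Polynomial

theorem SymmPoly.reflect_eq {P : ℝ[X]} (h : SymmPoly P) : reflect P.natDegree P = P := by
  ext k
  rw [coeff_reflect]
  rcases le_or_gt k P.natDegree with hk | hk
  · rw [revAt_le hk, h k hk]
  · rw [revAt_eq_self_of_lt hk]

theorem stmt_16_general (f g : Polynomial ℝ)
    (hfs : SymmPoly f) (hgs : SymmPoly g)
    (hdeg : f.natDegree = g.natDegree + 2)
    (s : Polynomial ℝ) (q : ℕ) (hq : s.natDegree ≤ q) :
    Polynomial.reflect (q * f.natDegree)
        (f ^ (q - s.natDegree) *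
          ∑ i ∈ Finset.range (s.natDegree + 1),
            C (s.coeff i) * (X * g) ^ i * f ^ (s.natDegree - i)) =
      f ^ (q - s.natDegree) *
        ∑ i ∈ Finset.range (s.natDegree + 1),
          C (s.coeff i) * (X * g) ^ i * f ^ (s.natDegree - i) := by
  have hXg : reflect f.natDegree (X * g) = X * g :=
    hdeg ▸ reflect_X_mul_eq_self le_rfl hgs.reflect_eq
  have hXgd : (X * g).natDegree ≤ f.natDegree :=
    natDegree_mul_le.trans (by have := natDegree_X_le (R := ℝ); omega)
  rw [Finset.mul_sum]
  refine reflect_sum_eq_self _ fun i hi => ?_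
  have hi : i ≤ s.natDegree := Finset.mem_range_succ_iff.mp hi
  have hterm : f ^ (q - s.natDegree) * (C (s.coeff i) * (X * g) ^ i * f ^ (s.natDegree - i)) =
      C (s.coeff i) * ((X * g) ^ i * f ^ (q - i)) := by
    rw [show q - i = q - s.natDegree + (s.natDegree - i) by omega, pow_add]
    ring
  rw [hterm, reflect_C_mul, show q * f.natDegree = i * f.natDegree + (q - i) * f.natDegree by
    rw [← add_mul]; congr 1; omega]
  exact congrArg _ <| reflect_mul_eq_self (natDegree_pow_le.trans (Nat.mul_le_mul_left i hXgd))
    natDegree_pow_le (reflect_pow_eq_self hXgd hXg i)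
    (reflect_pow_eq_self le_rfl hfs.reflect_eq _)

theorem stmt_16 (f g : Polynomial ℝ) (hf0 : f.coeff 0 = 1) (hg0 : g.coeff 0 = 1)
    (hfs : SymmPoly f) (hgs : SymmPoly g)
    (hdeg : f.natDegree = g.natDegree + 2)
    (s : Polynomial ℝ) (q : ℕ) (hq : s.natDegree ≤ q) :
    Polynomial.reflect (q * f.natDegree)
        (f ^ (q - s.natDegree) *
          ∑ i ∈ Finset.range (s.natDegree + 1),
            C (s.coeff i) * (X * g) ^ i * f ^ (s.natDegree - i)) =
      f ^ (q - s.natDegree) *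
        ∑ i ∈ Finset.range (s.natDegree + 1),
          C (s.coeff i) * (X * g) ^ i * f ^ (s.natDegree - i) :=
  stmt_16_general f g hfs hgs hdeg s q hq
end

section
/- For n \ge 1, the independence polynomial of the corona G \circ K_1 (add a pendant vertex to every vertex of G) of a graph G of order n satisfies I(G \circ K_1; x) = (1+x)^n I(G; x/(1+x)). -/
open Polynomial

open scoped Classical in
/-- The independence polynomial of a finite simple graph. -/
noncomputable def indepPoly {V : Type} [Fintype V] (G : SimpleGraph V) : Polynomial ℝ :=
  ∑ s ∈ Finset.univ.filter (fun s : Finset V => ∀ u ∈ s, ∀ v ∈ s, ¬ G.Adj u v),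
    (X : Polynomial ℝ) ^ s.card

/-- The corona `G ∘ K₁`: attach a private pendant vertex to each vertex of `G`.
Vertices `Sum.inl v` are the original ones, `Sum.inr v` is the pendant at `v`. -/
def coronaK1 {V : Type} (G : SimpleGraph V) : SimpleGraph (V ⊕ V) :=
  SimpleGraph.fromRel (fun x y =>
    match x, y with
    | Sum.inl a, Sum.inl b => G.Adj a b
    | Sum.inl a, Sum.inr b => a = b
    | _, _ => False)


/-!
An independent set of `G ∘ K₁` consists of an independent set `A` of `G` together with an
arbitrary set of pendants hanging at vertices outside `A`. Summing over the pendants contributes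
`x ^ |A| * (1 + x) ^ (n - |A|)`, and grouping the sets `A` by size gives the formula.
-/

open Finset

open scoped Classical in
noncomputable def indepSets {V : Type} [Fintype V] (G : SimpleGraph V) : Finset (Finset V) :=
  univ.filter fun s : Finset V => ∀ u ∈ s, ∀ v ∈ s, ¬ G.Adj u v

lemma indepPoly_eq_sum_indepSets {V : Type} [Fintype V] (G : SimpleGraph V) :
    indepPoly G = ∑ s ∈ indepSets G, (X : ℝ[X]) ^ #s :=
  rfl

@[simp]
lemma mem_indepSets {V : Type} [Fintype V] {G : SimpleGraph V} {s : Finset V} :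
    s ∈ indepSets G ↔ ∀ u ∈ s, ∀ v ∈ s, ¬ G.Adj u v := by
  simp [indepSets]

section Corona

variable {V : Type} (G : SimpleGraph V) {a b : V}

@[simp]
lemma coronaK1_adj_inl_inl : (coronaK1 G).Adj (.inl a) (.inl b) ↔ G.Adj a b := by
  simp only [coronaK1, SimpleGraph.fromRel_adj, ne_eq, Sum.inl.injEq]
  exact ⟨fun ⟨_, h⟩ => h.elim id G.adj_symm, fun h => ⟨h.ne, .inl h⟩⟩

@[simp]
lemma coronaK1_adj_inl_inr : (coronaK1 G).Adj (.inl a) (.inr b) ↔ a = b := by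
  simp [coronaK1]

@[simp]
lemma coronaK1_adj_inr_inl : (coronaK1 G).Adj (.inr a) (.inl b) ↔ a = b := by
  simp [coronaK1, eq_comm]

@[simp]
lemma coronaK1_adj_inr_inr : ¬ (coronaK1 G).Adj (.inr a) (.inr b) := by
  simp [coronaK1]

lemma disjSum_mem_indepSets_coronaK1 [Fintype V] [DecidableEq V] (A B : Finset V) :
    A.disjSum B ∈ indepSets (coronaK1 G) ↔ A ∈ indepSets G ∧ B ⊆ Aᶜ := by
  simp only [mem_indepSets, Sum.forall, inl_mem_disjSum, inr_mem_disjSum, coronaK1_adj_inl_inl,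
    coronaK1_adj_inl_inr, coronaK1_adj_inr_inl, coronaK1_adj_inr_inr, not_false_eq_true,
    implies_true, and_true, subset_iff, mem_compl]
  constructor
  · intro h
    exact ⟨fun u hu => (h.1 u hu).1, fun v hvB hvA => h.2 v hvB v hvA rfl⟩
  · rintro ⟨hA, hBA⟩
    exact ⟨fun u hu => ⟨hA u hu, fun v hv huv => hBA (huv ▸ hv) hu⟩,
      fun v hv u hu hvu => hBA hv (hvu ▸ hu)⟩

end Corona

lemma sum_powerset_X_pow {R ι : Type*} [CommSemiring R] (s : Finset ι) :
    ∑ t ∈ s.powerset, (X : R[X]) ^ #t = (1 + X) ^ #s := by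
  simpa [add_comm] using sum_pow_mul_eq_add_pow (X : R[X]) 1 s

lemma indepPoly_coronaK1 {V : Type} [Fintype V] (G : SimpleGraph V) :
    indepPoly (coronaK1 G) =
      ∑ A ∈ indepSets G, (X : ℝ[X]) ^ #A * (1 + X) ^ (Fintype.card V - #A) := by
  classical
  rw [indepPoly_eq_sum_indepSets]
  calc _ = ∑ p ∈ (indepSets G).sigma (fun A => Aᶜ.powerset), (X : ℝ[X]) ^ (#p.1 + #p.2) := by
        refine sum_nbij' (fun S => ⟨S.toLeft, S.toRight⟩) (fun p => p.1.disjSum p.2)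
          ?_ ?_ (fun S _ => toLeft_disjSum_toRight) (fun p _ => by simp)
          (fun S _ => by rw [card_toLeft_add_card_toRight])
        · intro S hS
          rw [mem_sigma, mem_powerset, ← disjSum_mem_indepSets_coronaK1, toLeft_disjSum_toRight]
          exact hS
        · rintro ⟨A, B⟩ h
          rw [disjSum_mem_indepSets_coronaK1]
          simpa only [mem_sigma, mem_powerset] using h
    _ = ∑ A ∈ indepSets G, (X : ℝ[X]) ^ #A * (1 + X) ^ #Aᶜ := by
        rw [sum_sigma]
        refine sum_congr rfl fun A _ => ?_
        simp_rw [pow_add, ← mul_sum, sum_powerset_X_pow]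
    _ = _ := by simp_rw [card_compl]

lemma sum_range_C_coeff_mul_X_pow_mul {R ι : Type*} [CommSemiring R] (s : Finset ι) (d : ι → ℕ)
    {n : ℕ} (hd : ∀ i ∈ s, d i ≤ n) (f : ℕ → R[X]) :
    ∑ k ∈ range (n + 1), C ((∑ i ∈ s, (X : R[X]) ^ d i).coeff k) * X ^ k * f k =
      ∑ i ∈ s, X ^ d i * f (d i) := by
  simp_rw [finsetSum_coeff, coeff_X_pow, map_sum, sum_mul]
  rw [sum_comm]
  refine sum_congr rfl fun i hi => ?_
  simp [apply_ite C, hd i hi]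

theorem stmt_17_general {V : Type} [Fintype V] (G : SimpleGraph V) (n : ℕ)
    (hn : n = Fintype.card V) :
    indepPoly (coronaK1 G) =
      ∑ k ∈ Finset.range (n + 1),
        C ((indepPoly G).coeff k) * X ^ k * (1 + X) ^ (n - k) := by
  subst hn
  rw [indepPoly_coronaK1, indepPoly_eq_sum_indepSets G,
    sum_range_C_coeff_mul_X_pow_mul _ _ (fun A _ => card_le_univ A)]

/-- `I(G ∘ K₁; x) = (1+x)^n I(G; x/(1+x))`, the right-hand side written out as
`∑_k i_k(G) x^k (1+x)^{n-k}`. -/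
theorem stmt_17 {V : Type} [Fintype V] (G : SimpleGraph V) (n : ℕ)
    (hn : n = Fintype.card V) (hn1 : 1 ≤ n) :
    indepPoly (coronaK1 G) =
      ∑ k ∈ Finset.range (n + 1),
        C ((indepPoly G).coeff k) * X ^ k * (1 + X) ^ (n - k) :=
  stmt_17_general G n hn
end
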